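/- arXiv:1008.5333 — 12 statements merged into one kernel-verified Lean document; each statement's English description precedes it below -/
import Mathlib

section
/- Let (V, ω) be a finite-dimensional real symplectic vector space, J an ω-compatible complex structure on V, and q_J the quadratic form q_J(v) = ω(v, Jv) (which is positive definite). Let ψ : V → ℂ be a differentiable function. Then ψ satisfies the polarization equations ∇_xψ = 0 for all x ∈ V_J^{0,1}, i.e. for all u, v ∈ V: Dψ(v)(u) + i·Dψ(v)(Ju) + (i/2)·(ω(u,v) + i·ω(Ju,v))·ψ(v) = 0, if and only if the function φ(v) := e^{q_J(v)/4}·ψ(v) is J-holomorphic, i.e. Dφ(v)(Ju) = i·Dφ(v)(u) for all u, v ∈ V. (In other words, every polarized section has the form ψ = e^{-q_J/4}·φ with φ a unique J-holomorphic function.) -/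
/-!
With `q(v) = ω(v, Jv)`, compatibility makes `ω(·, J·)` symmetric, so `Dq(v)u = 2ω(u, Jv)` and
`D(e^{q/4}ψ)(v)u = e^{q(v)/4}(Dψ(v)u + ω(u, Jv)ψ(v)/2)`. Substituting this and
`ω(Ju, Jv) = ω(u, v)`, `ω(Ju, v) = -ω(u, Jv)`, the Cauchy–Riemann defect
`Dφ(v)(Ju) - i·Dφ(v)u` is `-i·e^{q(v)/4}` times the left side of the polarization equation at
`(u, v)`, and `e^{q/4}` never vanishes.
-/
open Complex

/-- The polarization equations `∇_x ψ = 0` for all `x ∈ V_J^{0,1}`, written out for the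
pre-quantum covariant derivative `∇_x = L_x + (i/2) ι_x ω` extended `ℂ`-linearly to
`x = u + i·Ju`. -/
def IsPolarizedSection {V : Type*} [NormedAddCommGroup V] [NormedSpace ℝ V]
    (ω : LinearMap.BilinForm ℝ V) (J : V →ₗ[ℝ] V) (ψ : V → ℂ) : Prop :=
  ∀ u v : V,
    fderiv ℝ ψ v u + Complex.I * fderiv ℝ ψ v (J u)
      + (Complex.I / 2) * ((ω u v : ℂ) + Complex.I * (ω (J u) v : ℂ)) * ψ v = 0

namespace LinearMap.BilinForm.IsAlt

variable {V : Type*} [AddCommGroup V] [Module ℝ V] {ω : LinearMap.BilinForm ℝ V}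
  {J : V →ₗ[ℝ] V}

theorem apply_map_comm (hω : ω.IsAlt) (hJ : J ∘ₗ J = -LinearMap.id)
    (hcompat : ∀ x y : V, ω (J x) (J y) = ω x y) (u v : V) : ω u (J v) = ω v (J u) := by
  have hJu : J (J u) = -u := by simpa using LinearMap.congr_fun hJ u
  rw [← hcompat v (J u), hJu, map_neg, ← hω.neg_eq]

theorem map_apply_eq_neg (hω : ω.IsAlt) (hJ : J ∘ₗ J = -LinearMap.id)
    (hcompat : ∀ x y : V, ω (J x) (J y) = ω x y) (u v : V) : ω (J u) v = -ω u (J v) := by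
  rw [hω.apply_map_comm hJ hcompat, hω.neg_eq]

end LinearMap.BilinForm.IsAlt

section
variable {V : Type*} [NormedAddCommGroup V] [NormedSpace ℝ V]

theorem HasFDerivAt.fderiv_cexp_mul_apply {f ψ : V → ℂ} {f' : V →L[ℝ] ℂ} {v : V}
    (hf : HasFDerivAt f f' v) (hψ : DifferentiableAt ℝ ψ v) (u : V) :
    fderiv ℝ (fun w => Complex.exp (f w) * ψ w) v u
      = Complex.exp (f v) * (fderiv ℝ ψ v u + f' u * ψ v) := by
  have h : HasFDerivAt (fun w => Complex.exp (f w) * ψ w) _ v := hf.cexp.mul hψ.hasFDerivAt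
  rw [h.fderiv]
  simp only [add_apply, smul_apply, smul_eq_mul]
  ring

theorem LinearMap.hasFDerivAt_ofReal_apply_self [FiniteDimensional ℝ V]
    (b : V →ₗ[ℝ] V →ₗ[ℝ] ℝ) (v : V) :
    HasFDerivAt (fun w => (b w w : ℂ))
      (ofRealCLM.comp (b.toContinuousBilinearMap v + b.toContinuousBilinearMap.flip v)) v :=
  ofRealCLM.hasFDerivAt.comp v <|
    (b.toContinuousBilinearMap.hasFDerivAt_of_bilinear (hasFDerivAt_id v)
      (hasFDerivAt_id v)).congr_fderiv (by ext u; simp)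

variable [FiniteDimensional ℝ V] {ω : LinearMap.BilinForm ℝ V} {J : V →ₗ[ℝ] V} {ψ : V → ℂ}

theorem fderiv_gaussian_mul_apply (hω : ω.IsAlt) (hJ : J ∘ₗ J = -LinearMap.id)
    (hcompat : ∀ x y : V, ω (J x) (J y) = ω x y) {v : V} (hψ : DifferentiableAt ℝ ψ v) (u : V) :
    fderiv ℝ (fun w => Complex.exp ((ω w (J w) : ℂ) / 4) * ψ w) v u
      = Complex.exp ((ω v (J v) : ℂ) / 4) * (fderiv ℝ ψ v u + (ω u (J v) : ℂ) / 2 * ψ v) := by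
  have hq : HasFDerivAt (fun w => (ω w (J w) : ℂ) / 4) ((4⁻¹ : ℂ) • ofRealCLM.comp
      ((ω.compl₂ J).toContinuousBilinearMap v + (ω.compl₂ J).toContinuousBilinearMap.flip v)) v := by
    simpa only [div_eq_mul_inv, LinearMap.compl₂_apply] using
      ((ω.compl₂ J).hasFDerivAt_ofReal_apply_self v).mul_const (4⁻¹ : ℂ)
  rw [hq.fderiv_cexp_mul_apply hψ]
  simp only [smul_apply, ContinuousLinearMap.comp_apply, add_apply,
    ContinuousLinearMap.flip_apply, LinearMap.toContinuousBilinearMap_apply,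
    LinearMap.compl₂_apply, ofRealCLM_apply, smul_eq_mul, hω.apply_map_comm hJ hcompat v u]
  push_cast
  ring

theorem fderiv_gaussian_mul_sub_I_mul (hω : ω.IsAlt) (hJ : J ∘ₗ J = -LinearMap.id)
    (hcompat : ∀ x y : V, ω (J x) (J y) = ω x y) {v : V} (hψ : DifferentiableAt ℝ ψ v) (u : V) :
    fderiv ℝ (fun w => Complex.exp ((ω w (J w) : ℂ) / 4) * ψ w) v (J u)
        - I * fderiv ℝ (fun w => Complex.exp ((ω w (J w) : ℂ) / 4) * ψ w) v u
      = -I * Complex.exp ((ω v (J v) : ℂ) / 4) * (fderiv ℝ ψ v u + I * fderiv ℝ ψ v (J u)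
          + (I / 2) * ((ω u v : ℂ) + I * (ω (J u) v : ℂ)) * ψ v) := by
  rw [fderiv_gaussian_mul_apply hω hJ hcompat hψ, fderiv_gaussian_mul_apply hω hJ hcompat hψ,
    hcompat, hω.map_apply_eq_neg hJ hcompat]
  push_cast
  linear_combination (Complex.exp ((ω v (J v) : ℂ) / 4) * (fderiv ℝ ψ v (J u)
    + (ω u v : ℂ) / 2 * ψ v - I * (ω u (J v) : ℂ) / 2 * ψ v)) * I_sq

end

theorem polarized_iff_gaussian_times_holomorphic_general
    {V : Type*} [NormedAddCommGroup V] [NormedSpace ℝ V] [FiniteDimensional ℝ V]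
    (ω : LinearMap.BilinForm ℝ V)
    (halt : ∀ x : V, ω x x = 0)
    (J : V →ₗ[ℝ] V)
    (hJ : J ∘ₗ J = -LinearMap.id)
    (hcompat : ∀ x y : V, ω (J x) (J y) = ω x y)
    (ψ : V → ℂ) (hψ : Differentiable ℝ ψ) :
    IsPolarizedSection ω J ψ ↔
      (∀ u v : V,
        fderiv ℝ (fun w => Complex.exp ((ω w (J w) : ℂ) / 4) * ψ w) v (J u) =
          Complex.I * fderiv ℝ (fun w => Complex.exp ((ω w (J w) : ℂ) / 4) * ψ w) v u) := by
  refine forall₂_congr fun u v => ?_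
  rw [← sub_eq_zero (b := I * _), fderiv_gaussian_mul_sub_I_mul halt hJ hcompat (hψ v)]
  simp [I_ne_zero, Complex.exp_ne_zero]

/-- Let `(V, ω)` be a finite-dimensional real symplectic vector space, `J` an
`ω`-compatible complex structure, and `q_J(v) = ω(v, Jv)`.  A differentiable `ψ : V → ℂ` satisfies
the polarization equations iff `φ(v) := e^{q_J(v)/4} ψ(v)` is `J`-holomorphic, i.e.
`Dφ(v)(Ju) = i·Dφ(v)(u)` for all `u, v`. -/
theorem polarized_iff_gaussian_times_holomorphic
    {V : Type*} [NormedAddCommGroup V] [NormedSpace ℝ V] [FiniteDimensional ℝ V]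
    (ω : LinearMap.BilinForm ℝ V)
    (halt : ∀ x : V, ω x x = 0)
    (hnondeg : ∀ x : V, (∀ y : V, ω x y = 0) → x = 0)
    (J : V →ₗ[ℝ] V)
    (hJ : J ∘ₗ J = -LinearMap.id)
    (hcompat : ∀ x y : V, ω (J x) (J y) = ω x y)
    (hpos : ∀ x : V, x ≠ 0 → 0 < ω x (J x))
    (ψ : V → ℂ) (hψ : Differentiable ℝ ψ) :
    IsPolarizedSection ω J ψ ↔
      (∀ u v : V,
        fderiv ℝ (fun w => Complex.exp ((ω w (J w) : ℂ) / 4) * ψ w) v (J u) =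
          Complex.I * fderiv ℝ (fun w => Complex.exp ((ω w (J w) : ℂ) / 4) * ψ w) v u) :=
  polarized_iff_gaussian_times_holomorphic_general ω halt J hJ hcompat ψ hψ
end

section
/- Let (V, ω) be a finite-dimensional real symplectic vector space, J an ω-compatible complex structure on V, and let α ∈ V* be a linear functional. Let ν⁻¹(α) ∈ V be the unique vector with ω(ν⁻¹(α), ·) = α. Define the pre-quantum operator α̂ on smooth functions ψ : V → ℂ by (α̂ψ)(v) = i·Dψ(v)(ν⁻¹(α)) − (1/2)·ω(ν⁻¹(α), v)·ψ(v) + α(v)·ψ(v). If a smooth function ψ satisfies the polarization equations Dψ(v)(u) + i·Dψ(v)(Ju) + (i/2)·(ω(u,v) + i·ω(Ju,v))·ψ(v) = 0 for all u, v ∈ V, then α̂ψ satisfies the same equations; that is, the pre-quantum operator α̂ preserves the space of J-polarized sections. -/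
open Complex

/-- The pre-quantum operator `α̂ = i ∇_{ν⁻¹(α)} + α`, i.e.
`(α̂ψ)(v) = i·Dψ(v)(a) − (1/2)·ω(a, v)·ψ(v) + α(v)·ψ(v)` with `a = ν⁻¹(α)`. -/
noncomputable def preQuantOp {V : Type*} [NormedAddCommGroup V] [NormedSpace ℝ V]
    (ω : LinearMap.BilinForm ℝ V) (α : V →ₗ[ℝ] ℝ) (a : V) (ψ : V → ℂ) : V → ℂ :=
  fun v => Complex.I * fderiv ℝ ψ v a - (1 / 2 : ℂ) * (ω a v : ℂ) * ψ v + (α v : ℂ) * ψ v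

/-- For a finite-dimensional real symplectic vector space `(V, ω)` with
`ω`-compatible complex structure `J` and a linear functional `α ∈ V*` with `ω(ν⁻¹(α), ·) = α`,
the pre-quantum operator `α̂` preserves the space of `J`-polarized sections. -/
theorem preQuantOp_preserves_polarized
    {V : Type*} [NormedAddCommGroup V] [NormedSpace ℝ V] [FiniteDimensional ℝ V]
    (ω : LinearMap.BilinForm ℝ V)
    (halt : ∀ x : V, ω x x = 0)
    (hnondeg : ∀ x : V, (∀ y : V, ω x y = 0) → x = 0)
    (J : V →ₗ[ℝ] V)
    (hJ : J ∘ₗ J = -LinearMap.id)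
    (hcompat : ∀ x y : V, ω (J x) (J y) = ω x y)
    (hpos : ∀ x : V, x ≠ 0 → 0 < ω x (J x))
    (α : V →ₗ[ℝ] ℝ) (a : V) (ha : ∀ v : V, ω a v = α v)
    (ψ : V → ℂ) (hψ : ContDiff ℝ (⊤ : ℕ∞) ψ)
    (hpol : IsPolarizedSection ω J ψ) :
    IsPolarizedSection ω J (preQuantOp ω α a ψ) := by
  intro u v
  have hψ1 : Differentiable ℝ ψ := hψ.differentiable (by simp)
  have hDc : ContDiff ℝ (⊤ : ℕ∞) (fderiv ℝ ψ) := hψ.fderiv_right (by simp)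
  have hDd : Differentiable ℝ (fderiv ℝ ψ) := hDc.differentiable (by simp)
  set B := fderiv ℝ (fderiv ℝ ψ) v with hBdef
  have hB : HasFDerivAt (fderiv ℝ ψ) B v := (hDd v).hasFDerivAt
  have hF : ∀ w : V, HasFDerivAt (fun x => fderiv ℝ ψ x w)
      ((ContinuousLinearMap.apply ℝ ℂ w).comp B) v := fun w =>
    (ContinuousLinearMap.apply ℝ ℂ w).hasFDerivAt.comp v hB
  have hωC : ∀ w : V, HasFDerivAt (fun x => ((ω w x : ℝ) : ℂ))
      (Complex.ofRealCLM.comp (LinearMap.toContinuousLinearMap (ω w))) v := fun w =>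
    (Complex.ofRealCLM.comp (LinearMap.toContinuousLinearMap (ω w))).hasFDerivAt
  have hαC : HasFDerivAt (fun x => ((α x : ℝ) : ℂ))
      (Complex.ofRealCLM.comp (LinearMap.toContinuousLinearMap α)) v :=
    (Complex.ofRealCLM.comp (LinearMap.toContinuousLinearMap α)).hasFDerivAt
  have hψv : HasFDerivAt ψ (fderiv ℝ ψ v) v := (hψ1 v).hasFDerivAt
  have hsymm : ∀ x y : V, B x y = B y x :=
    second_derivative_symmetric (fun y => (hψ1 y).hasFDerivAt) hB
  -- differentiate the polarization equation (for fixed u) at v in direction a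
  have hg : HasFDerivAt (fun x => fderiv ℝ ψ x u + Complex.I * fderiv ℝ ψ x (J u)
      + (Complex.I / 2) * ((ω u x : ℂ) + Complex.I * (ω (J u) x : ℂ)) * ψ x)
      (((ContinuousLinearMap.apply ℝ ℂ u).comp B
        + Complex.I • ((ContinuousLinearMap.apply ℝ ℂ (J u)).comp B))
        + (((Complex.I / 2) * ((ω u v : ℂ) + Complex.I * (ω (J u) v : ℂ))) • fderiv ℝ ψ v
          + ψ v • ((Complex.I / 2) • (Complex.ofRealCLM.comp (LinearMap.toContinuousLinearMap (ω u))
              + Complex.I • (Complex.ofRealCLM.comp (LinearMap.toContinuousLinearMap (ω (J u)))))))) v := by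
    exact ((hF u).add ((hF (J u)).const_mul Complex.I)).add
      ((((hωC u).add ((hωC (J u)).const_mul Complex.I)).const_mul (Complex.I / 2)).mul hψv)
  have hg0 : HasFDerivAt (fun x => fderiv ℝ ψ x u + Complex.I * fderiv ℝ ψ x (J u)
      + (Complex.I / 2) * ((ω u x : ℂ) + Complex.I * (ω (J u) x : ℂ)) * ψ x)
      (0 : V →L[ℝ] ℂ) v := by
    have hfun : (fun x => fderiv ℝ ψ x u + Complex.I * fderiv ℝ ψ x (J u)
        + (Complex.I / 2) * ((ω u x : ℂ) + Complex.I * (ω (J u) x : ℂ)) * ψ x)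
        = fun _ => (0 : ℂ) := funext (fun x => hpol u x)
    rw [hfun]
    exact hasFDerivAt_const 0 v
  have hEq := hg.unique hg0
  have Estar := DFunLike.congr_fun hEq a
  simp only [ContinuousLinearMap.add_apply, ContinuousLinearMap.coe_comp', Function.comp_apply,
    ContinuousLinearMap.apply_apply, ContinuousLinearMap.smul_apply, smul_eq_mul,
    ContinuousLinearMap.coe_smul', Pi.smul_apply, Complex.ofRealCLM_apply,
    LinearMap.coe_toContinuousLinearMap', ContinuousLinearMap.zero_apply] at Estar
  -- derivative of the pre-quantum operator
  have hφ : HasFDerivAt (preQuantOp ω α a ψ)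
      ((Complex.I • ((ContinuousLinearMap.apply ℝ ℂ a).comp B)
        - (((1 / 2 : ℂ) * (ω a v : ℂ)) • fderiv ℝ ψ v
          + ψ v • ((1 / 2 : ℂ) • (Complex.ofRealCLM.comp (LinearMap.toContinuousLinearMap (ω a))))))
        + ((α v : ℂ) • fderiv ℝ ψ v
          + ψ v • (Complex.ofRealCLM.comp (LinearMap.toContinuousLinearMap α)))) v := by
    unfold preQuantOp
    exact (((hF a).const_mul Complex.I).sub
      (((hωC a).const_mul (1 / 2 : ℂ)).mul hψv)).add (hαC.mul hψv)
  have hφu := DFunLike.congr_fun hφ.fderiv u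
  have hφJu := DFunLike.congr_fun hφ.fderiv (J u)
  simp only [ContinuousLinearMap.add_apply, ContinuousLinearMap.sub_apply,
    ContinuousLinearMap.coe_comp', Function.comp_apply, ContinuousLinearMap.apply_apply,
    ContinuousLinearMap.smul_apply, smul_eq_mul, ContinuousLinearMap.coe_smul', Pi.smul_apply,
    Complex.ofRealCLM_apply, LinearMap.coe_toContinuousLinearMap'] at hφu hφJu
  rw [hφu, hφJu]
  simp only [preQuantOp]
  -- skew-symmetry of ω
  have hskew : ∀ x y : V, ω x y = -ω y x := by
    intro x y
    have h := halt (x + y)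
    simp only [map_add, LinearMap.add_apply] at h
    rw [halt x, halt y] at h
    linarith
  have h1 : ((ω u a : ℝ) : ℂ) = -((ω a u : ℝ) : ℂ) := by rw [hskew u a]; push_cast; ring
  have h2 : ((ω (J u) a : ℝ) : ℂ) = -((ω a (J u) : ℝ) : ℂ) := by
    rw [hskew (J u) a]; push_cast; ring
  have hα1 : ((α u : ℝ) : ℂ) = ((ω a u : ℝ) : ℂ) := by rw [ha u]
  have hα2 : ((α (J u) : ℝ) : ℂ) = ((ω a (J u) : ℝ) : ℂ) := by rw [ha (J u)]
  have hα3 : ((α v : ℝ) : ℂ) = ((ω a v : ℝ) : ℂ) := by rw [ha v]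
  have hs1 : B u a = B a u := hsymm u a
  have hs2 : B (J u) a = B a (J u) := hsymm (J u) a
  rw [hs1, hs2, hα1, hα2, hα3]
  have Hpol := hpol u v
  linear_combination Complex.I * Estar + (((ω a v : ℝ) : ℂ) / 2) * Hpol
    + (-(Complex.I ^ 2) * ψ v / 2) * h1 + (-(Complex.I ^ 3) * ψ v / 2) * h2
    + (ψ v * (((ω a u : ℝ) : ℂ) + Complex.I * ((ω a (J u) : ℝ) : ℂ)) / 2) * Complex.I_mul_I
end

section
/- Let V be a finite-dimensional real vector space, ω a symplectic form on V, and A : V → V a linear map such that the bilinear form (x, y) ↦ ω(x, Ay) is symmetric and positive definite. Then det A > 0. -/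
/-! If `A v = μ v` then `ω(v, A v) = μ ω(v, v) = 0`, so positivity leaves `A` without real
eigenvalues. The characteristic polynomial of `-A` is then monic without real roots, hence
positive everywhere, and its value at `0` is `det A`. -/

open Polynomial

namespace Module.End

lemma HasEigenvalue.neg {R M : Type*} [CommRing R] [AddCommGroup M] [Module R M]
    {f : End R M} {μ : R} (h : f.HasEigenvalue μ) : (-f).HasEigenvalue (-μ) := by
  obtain ⟨v, hv⟩ := h.exists_hasEigenvector
  refine hasEigenvalue_of_hasEigenvector (x := v) ⟨?_, hv.2⟩
  rw [mem_eigenspace_iff, LinearMap.neg_apply, hv.apply_eq_smul, neg_smul]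

theorem det_pos_of_forall_not_hasEigenvalue {V : Type*} [AddCommGroup V] [Module ℝ V]
    [FiniteDimensional ℝ V] (f : End ℝ V) (hf : ∀ μ, ¬ f.HasEigenvalue μ) :
    0 < LinearMap.det f := by
  have hroots : ∀ μ, ¬ (-f).charpoly.IsRoot μ := fun μ hμ ↦ by
    rw [← hasEigenvalue_iff_isRoot_charpoly] at hμ
    exact hf (-μ) (neg_neg f ▸ hμ.neg)
  have hpos := zero_lt_eval_of_roots_lt_of_leadingCoeff_nonneg (x := 0)
    (fun μ hμ ↦ (hroots μ hμ).elim) ((-f).charpoly_monic.leadingCoeff ▸ zero_le_one)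
  simpa [LinearMap.eval_charpoly] using hpos

theorem not_hasEigenvalue_of_isAlt_of_pos {R M : Type*} [CommRing R] [Preorder R]
    [AddCommGroup M] [Module R M] (ω : LinearMap.BilinForm R M) (halt : ∀ x, ω x x = 0)
    (f : End R M) (hpos : ∀ x, x ≠ 0 → 0 < ω x (f x)) (μ : R) : ¬ f.HasEigenvalue μ := by
  intro hμ
  obtain ⟨v, hv⟩ := hμ.exists_hasEigenvector
  have := hpos v hv.2
  rw [hv.apply_eq_smul, map_smul, halt, smul_zero] at this
  exact lt_irrefl _ this

end Module.End

theorem det_pos_of_symplectic_symm_posdef_general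
    {V : Type*} [AddCommGroup V] [Module ℝ V] [FiniteDimensional ℝ V]
    (ω : LinearMap.BilinForm ℝ V)
    (halt : ∀ x : V, ω x x = 0)
    (A : V →ₗ[ℝ] V)
    (hpos : ∀ x : V, x ≠ 0 → 0 < ω x (A x)) :
    0 < LinearMap.det A :=
  Module.End.det_pos_of_forall_not_hasEigenvalue A
    (Module.End.not_hasEigenvalue_of_isAlt_of_pos ω halt A hpos)

/-- Let `V` be a finite-dimensional real vector space, `ω` a symplectic form on
`V` (nondegenerate alternating bilinear form), and `A : V → V` a linear map such that the bilinear
form `(x, y) ↦ ω(x, Ay)` is symmetric and positive definite.  Then `det A > 0`. -/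
theorem det_pos_of_symplectic_symm_posdef
    {V : Type*} [AddCommGroup V] [Module ℝ V] [FiniteDimensional ℝ V]
    (ω : LinearMap.BilinForm ℝ V)
    (halt : ∀ x : V, ω x x = 0)
    (hnondeg : ∀ x : V, (∀ y : V, ω x y = 0) → x = 0)
    (A : V →ₗ[ℝ] V)
    (hsymm : ∀ x y : V, ω x (A y) = ω y (A x))
    (hpos : ∀ x : V, x ≠ 0 → 0 < ω x (A x)) :
    0 < LinearMap.det A :=
  det_pos_of_symplectic_symm_posdef_general ω halt A hpos
end

section
/- Let (V, ω) be a finite-dimensional real symplectic vector space and let J₀ and J₁ be two ω-compatible complex structures on V. Then the endomorphism (J₀ + J₁)/2 is invertible; in fact det((J₀ + J₁)/2) > 0. -/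
/-!
For `x ≠ 0` both `ω x (J₀ x)` and `ω x (J₁ x)` are positive, hence so is `ω x (A x)` for
`A = (J₀ + J₁)/2`. Since `ω` is alternating, an eigenvector `x` of `A` would give
`ω x (A x) = μ ω x x = 0`, so `A` has no real eigenvalue. Along the segment
`s ↦ (1 - s) • id + s • A` the determinant is then continuous and never zero, and it
starts at `det id = 1`; so `det A > 0`.
-/

open Set

section DetPos

variable {V : Type*} [AddCommGroup V] [Module ℝ V] [FiniteDimensional ℝ V]

theorem LinearMap.continuous_det_lineMap_id (f : Module.End ℝ V) :
    Continuous fun s : ℝ => LinearMap.det ((1 - s) • LinearMap.id + s • f) := by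
  let b := Module.finBasis ℝ V
  simp_rw [← LinearMap.det_toMatrix b, map_add, map_smul, LinearMap.toMatrix_id]
  fun_prop

theorem LinearMap.det_lineMap_id_ne_zero {f : Module.End ℝ V}
    (hf : ∀ μ, f.HasEigenvalue μ → 0 < μ) {s : ℝ} (hs : s ∈ Icc (0 : ℝ) 1) :
    LinearMap.det ((1 - s) • LinearMap.id + s • f) ≠ 0 := by
  intro hdet
  obtain ⟨x, hx, hx0⟩ := Submodule.exists_mem_ne_zero_of_ne_bot
    (LinearMap.det_eq_zero_iff_ker_ne_bot.mp hdet)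
  have hsum : (1 - s) • x + s • f x = 0 := by simpa using hx
  rcases hs.1.eq_or_lt with rfl | hs0
  · exact hx0 (by simpa using hsum)
  have hfx : f x = (-((1 - s) / s)) • x := by
    linear_combination (norm := skip) s⁻¹ • hsum
    match_scalars <;> field_simp <;> ring
  have hμ := hf _ (Module.End.hasEigenvalue_of_hasEigenvector
    ⟨Module.End.mem_eigenspace_iff.2 hfx, hx0⟩)
  have : 0 ≤ (1 - s) / s := div_nonneg (by linarith [hs.2]) hs0.le
  linarith

theorem LinearMap.det_pos_of_forall_hasEigenvalue_pos {f : Module.End ℝ V}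
    (hf : ∀ μ, f.HasEigenvalue μ → 0 < μ) : 0 < LinearMap.det f := by
  by_contra! hle
  obtain ⟨s, hs, hs0⟩ := intermediate_value_Icc' zero_le_one
    (LinearMap.continuous_det_lineMap_id f).continuousOn
    (⟨by simpa using hle, by simp⟩ : (0 : ℝ) ∈ Icc _ _)
  exact LinearMap.det_lineMap_id_ne_zero hf hs hs0

end DetPos

theorem LinearMap.IsAlt.not_hasEigenvalue_of_pos {R M : Type*} [CommRing R] [PartialOrder R]
    [AddCommGroup M] [Module R M] {ω : LinearMap.BilinForm R M} (hω : ω.IsAlt)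
    {f : Module.End R M} (hf : ∀ x, x ≠ 0 → 0 < ω x (f x)) (μ : R) : ¬ f.HasEigenvalue μ := by
  intro hμ
  obtain ⟨x, hx⟩ := hμ.exists_hasEigenvector
  have hpos := hf x hx.2
  rw [Module.End.mem_eigenspace_iff.1 hx.1, map_smul, hω x, smul_zero] at hpos
  exact hpos.false

theorem halfSum_of_compatible_complexStructures_det_pos_general
    {V : Type*} [AddCommGroup V] [Module ℝ V] [FiniteDimensional ℝ V]
    (ω : LinearMap.BilinForm ℝ V)
    (halt : ∀ x : V, ω x x = 0)
    (J₀ J₁ : V →ₗ[ℝ] V)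
    (hp₀ : ∀ x : V, x ≠ 0 → 0 < ω x (J₀ x))
    (hp₁ : ∀ x : V, x ≠ 0 → 0 < ω x (J₁ x)) :
    0 < LinearMap.det ((2 : ℝ)⁻¹ • (J₀ + J₁)) ∧
      Function.Bijective ((2 : ℝ)⁻¹ • (J₀ + J₁) : V →ₗ[ℝ] V) := by
  set A : V →ₗ[ℝ] V := (2 : ℝ)⁻¹ • (J₀ + J₁)
  have hpos : ∀ x : V, x ≠ 0 → 0 < ω x (A x) := fun x hx => by
    simp only [A, LinearMap.smul_apply, LinearMap.add_apply, map_smul, map_add, smul_eq_mul]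
    linarith [hp₀ x hx, hp₁ x hx]
  have hdet : 0 < LinearMap.det A := LinearMap.det_pos_of_forall_hasEigenvalue_pos
    fun μ hμ => absurd hμ (LinearMap.IsAlt.not_hasEigenvalue_of_pos halt hpos μ)
  exact ⟨hdet, (Module.End.isUnit_iff A).1
    ((LinearMap.isUnit_iff_isUnit_det A).2 hdet.ne'.isUnit)⟩

/-- Let `(V, ω)` be a finite-dimensional real symplectic vector space and let
`J₀`, `J₁` be two `ω`-compatible complex structures on `V`.  Then the endomorphism
`(J₀ + J₁)/2` is invertible; in fact `det ((J₀ + J₁)/2) > 0`. -/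
theorem halfSum_of_compatible_complexStructures_det_pos
    {V : Type*} [AddCommGroup V] [Module ℝ V] [FiniteDimensional ℝ V]
    (ω : LinearMap.BilinForm ℝ V)
    (halt : ∀ x : V, ω x x = 0)
    (hnondeg : ∀ x : V, (∀ y : V, ω x y = 0) → x = 0)
    (J₀ J₁ : V →ₗ[ℝ] V)
    (hJ₀ : J₀ ∘ₗ J₀ = -LinearMap.id)
    (hJ₁ : J₁ ∘ₗ J₁ = -LinearMap.id)
    (hc₀ : ∀ x y : V, ω (J₀ x) (J₀ y) = ω x y)
    (hc₁ : ∀ x y : V, ω (J₁ x) (J₁ y) = ω x y)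
    (hp₀ : ∀ x : V, x ≠ 0 → 0 < ω x (J₀ x))
    (hp₁ : ∀ x : V, x ≠ 0 → 0 < ω x (J₁ x)) :
    0 < LinearMap.det ((2 : ℝ)⁻¹ • (J₀ + J₁)) ∧
      Function.Bijective ((2 : ℝ)⁻¹ • (J₀ + J₁) : V →ₗ[ℝ] V) :=
  halfSum_of_compatible_complexStructures_det_pos_general ω halt J₀ J₁ hp₀ hp₁
end

section
/- Let V be a finite-dimensional real vector space and let J and J₀ be two complex structures on V. Then the intersection V_J^{1,0} ∩ V_{J₀}^{0,1} (inside V^ℂ) is nonzero if and only if the linear map J + J₀ : V → V is not invertible. -/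
/-!
A vector `w` with `J w = i w` and `J₀ w = -i w` is killed by the complexification of `J + J₀`,
which is injective exactly when `J + J₀` is. Conversely, if `(J + J₀) v = 0` with `v ≠ 0`, then
`J₀ = -J` on the plane spanned by `v` and `J v`, so `v - i J v` lies in both eigenspaces.
-/

open TensorProduct

namespace LinearMap

variable {R A M : Type*} [CommRing R] [CommRing A] [Algebra R A] [AddCommGroup M] [Module R M]

theorem baseChange_add_apply_eq_zero_of_mem_eigenspace_inf {f g : M →ₗ[R] M} {μ : A}
    {w : A ⊗[R] M} (hw : w ∈ Module.End.eigenspace (f.baseChange A) μ ⊓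
      Module.End.eigenspace (g.baseChange A) (-μ)) :
    (f + g).baseChange A w = 0 := by
  rw [Submodule.mem_inf, Module.End.mem_eigenspace_iff, Module.End.mem_eigenspace_iff] at hw
  rw [baseChange_add, add_apply, hw.1, hw.2, neg_smul, add_neg_cancel]

theorem eigenspace_baseChange_inf_eq_bot_of_injective_add [Module.Flat R A] {f g : M →ₗ[R] M}
    (hfg : Function.Injective (f + g)) (μ : A) :
    Module.End.eigenspace (f.baseChange A) μ ⊓ Module.End.eigenspace (g.baseChange A) (-μ) = ⊥ := by
  have hinj : Function.Injective ((f + g).baseChange A) := by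
    rw [baseChange_eq_ltensor]
    exact Module.Flat.lTensor_preserves_injective_linearMap _ hfg
  refine (Submodule.eq_bot_iff _).2 fun w hw => hinj ?_
  rw [baseChange_add_apply_eq_zero_of_mem_eigenspace_inf hw, map_zero]

theorem one_tmul_sub_tmul_mem_eigenspace_baseChange {f : M →ₗ[R] M} {ζ : A} (hζ : ζ * ζ = -1)
    {v u : M} (hv : f v = u) (hu : f u = -v) :
    (1 : A) ⊗ₜ v - ζ ⊗ₜ u ∈ Module.End.eigenspace (f.baseChange A) ζ := by
  rw [Module.End.mem_eigenspace_iff, map_sub, baseChange_tmul, baseChange_tmul, hv, hu,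
    smul_sub, smul_tmul', smul_tmul', smul_eq_mul, smul_eq_mul, mul_one, hζ, tmul_neg, neg_tmul]
  abel

end LinearMap

theorem Complex.one_tmul_sub_I_tmul_ne_zero {V : Type*} [AddCommGroup V] [Module ℝ V]
    {v : V} (hv : v ≠ 0) (u : V) : (1 : ℂ) ⊗ₜ[ℝ] v - Complex.I ⊗ₜ u ≠ 0 := by
  intro h
  apply hv
  simpa [sub_tmul] using
    congrArg (fun x => TensorProduct.lid ℝ V (LinearMap.rTensor V Complex.reLm x)) h

/-- Let `V` be a finite-dimensional real vector space and `J`, `J₀` two complex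
structures on `V`.  Then `V_J^{1,0} ∩ V_{J₀}^{0,1} ≠ 0` inside the complexification `ℂ ⊗[ℝ] V`
if and only if `J + J₀ : V → V` is not invertible. -/
theorem holo_antiholo_intersect_iff_sum_not_invertible
    {V : Type*} [AddCommGroup V] [Module ℝ V] [FiniteDimensional ℝ V]
    (J J₀ : V →ₗ[ℝ] V)
    (hJ : J ∘ₗ J = -LinearMap.id)
    (hJ₀ : J₀ ∘ₗ J₀ = -LinearMap.id) :
    (Module.End.eigenspace (J.baseChange ℂ) Complex.I ⊓
        Module.End.eigenspace (J₀.baseChange ℂ) (-Complex.I) ≠ ⊥) ↔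
      ¬ Function.Bijective (J + J₀ : V →ₗ[ℝ] V) := by
  refine ⟨fun hne hbij => hne (LinearMap.eigenspace_baseChange_inf_eq_bot_of_injective_add
    hbij.1 _), fun hnb => ?_⟩
  obtain ⟨v, hv, hv0⟩ := (Submodule.ne_bot_iff _).1 fun hker =>
    hnb ⟨LinearMap.ker_eq_bot.1 hker,
      LinearMap.injective_iff_surjective.1 (LinearMap.ker_eq_bot.1 hker)⟩
  have hJ₀v : J₀ v = -J v := eq_neg_of_add_eq_zero_right hv
  have hJJv : J (J v) = -v := LinearMap.congr_fun hJ v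
  have hJ₀Jv : J₀ (-J v) = -v := by rw [← hJ₀v]; exact LinearMap.congr_fun hJ₀ v
  refine (Submodule.ne_bot_iff _).2 ⟨1 ⊗ₜ v - Complex.I ⊗ₜ J v, Submodule.mem_inf.2 ⟨?_, ?_⟩,
    Complex.one_tmul_sub_I_tmul_ne_zero hv0 _⟩
  · exact LinearMap.one_tmul_sub_tmul_mem_eigenspace_baseChange Complex.I_mul_I rfl hJJv
  · simpa only [neg_tmul, tmul_neg, neg_neg] using
      LinearMap.one_tmul_sub_tmul_mem_eigenspace_baseChange (ζ := -Complex.I)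
        (by rw [neg_mul_neg, Complex.I_mul_I]) hJ₀v hJ₀Jv
end

section
/- Let V be a finite-dimensional real vector space, J₀ a complex structure on V, and M ∈ End(V) with M∘J₀ = −J₀∘M. For t ∈ ℝ set g_t := exp(tM) and J_t := g_t∘J₀∘g_t⁻¹. Then: (i) J_t = exp(2tM)∘J₀, and J_t∘J₀ = −exp(2tM); (ii) J_{t/2}∘J₀ = J_t∘J_{t/2}; (iii) the complexification of J_{t/2} maps V_{J₀}^{1,0} into V_{J_t}^{1,0}, i.e. if J₀^ℂ v = i·v for v ∈ V^ℂ then J_t^ℂ (J_{t/2}^ℂ v) = i·(J_{t/2}^ℂ v). (These identities express that J_{t/2}/i realizes the parallel transport of holomorphic subspaces along the geodesic of complex structures from J₀ to J_t.) -/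
open TensorProduct

/-!
Since `M` anticommutes with `J₀`, so does `tM`, hence `J₀ exp(tM) = exp(-tM) J₀`. Moving `J₀` past
`exp(-tM) = exp(tM)⁻¹` in `J_t = exp(tM) J₀ exp(-tM)` gives `J_t = exp(2tM) J₀`, and the same
commutation rule turns `J_t J_{t/2} = exp(2tM) J₀ exp(tM) J₀` into `exp(tM) J₀ J₀ = J_{t/2} J₀`.
Thus `J_{t/2}` intertwines `J₀` with `J_t`, so its complexification carries the `i`-eigenvectors
of `J₀` to `i`-eigenvectors of `J_t`.
-/

namespace NormedSpace

variable {𝔸 : Type*} [NormedRing 𝔸] [NormedAlgebra ℚ 𝔸] [CompleteSpace 𝔸] {J x : 𝔸}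

theorem exp_mul_mul_inverse_exp_of_semiconjBy_neg (h : SemiconjBy J x (-x)) :
    exp x * J * Ring.inverse (exp x) = exp (x + x) * J := by
  have hJ : J * exp (-x) = exp x * J := by
    have := h.neg_right.exp_right
    rwa [neg_neg] at this
  rw [Ring.inverse_exp, mul_assoc, hJ, ← mul_assoc, exp_add_of_commute (Commute.refl x)]

theorem exp_add_self_mul_mul_exp_mul_of_semiconjBy_neg (h : SemiconjBy J x (-x)) :
    exp (x + x) * J * (exp x * J) = exp x * J * J := by
  have hJ : J * exp x = exp (-x) * J := h.exp_right
  calc exp (x + x) * J * (exp x * J) = exp (x + x) * exp (-x) * J * J := by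
        simp only [mul_assoc, ← mul_assoc J, hJ]
    _ = exp x * J * J := by
        rw [← exp_add_of_commute ((Commute.refl x).add_left (Commute.refl x)).neg_right,
          add_neg_cancel_right]

end NormedSpace

theorem LinearMap.baseChange_apply_eq_smul_of_comp_eq {R A M N : Type*} [CommSemiring R]
    [Semiring A] [Algebra R A] [AddCommMonoid M] [AddCommMonoid N] [Module R M] [Module R N]
    {g : M →ₗ[R] M} {f : N →ₗ[R] N} {h : M →ₗ[R] N} (hfg : h ∘ₗ g = f ∘ₗ h)
    {v : A ⊗[R] M} {a : A} (hv : g.baseChange A v = a • v) :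
    f.baseChange A (h.baseChange A v) = a • h.baseChange A v := by
  rw [← LinearMap.comp_apply, ← LinearMap.baseChange_comp, ← hfg, LinearMap.baseChange_comp,
    LinearMap.comp_apply, hv, map_smul]

open NormedSpace in
/-- Let `V` be a finite-dimensional real vector space, `J₀` a complex structure
on `V`, `M` an endomorphism anti-commuting with `J₀`, and for `t ∈ ℝ` set `g_t := exp(tM)` and
`J_t := g_t ∘ J₀ ∘ g_t⁻¹`.  Then (i) `J_t = exp(2tM) ∘ J₀` and `J_t ∘ J₀ = −exp(2tM)`;
(ii) `J_{t/2} ∘ J₀ = J_t ∘ J_{t/2}`; (iii) the complexification of `J_{t/2}` maps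
`V_{J₀}^{1,0}` into `V_{J_t}^{1,0}`. -/
theorem geodesic_parallel_transport_of_holomorphic_subspaces
    {V : Type*} [NormedAddCommGroup V] [NormedSpace ℝ V] [FiniteDimensional ℝ V]
    (J₀ M : V →L[ℝ] V)
    (hJ₀ : J₀ * J₀ = -1)
    (hM : M * J₀ = -(J₀ * M))
    (Jt : ℝ → (V →L[ℝ] V))
    (hJt : ∀ t : ℝ, Jt t =
      NormedSpace.exp (t • M) * J₀ * Ring.inverse (NormedSpace.exp (t • M))) :
    (∀ t : ℝ, Jt t = NormedSpace.exp ((2 * t) • M) * J₀ ∧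
        Jt t * J₀ = -(NormedSpace.exp ((2 * t) • M))) ∧
    (∀ t : ℝ, Jt (t / 2) * J₀ = Jt t * Jt (t / 2)) ∧
    (∀ (t : ℝ) (v : ℂ ⊗[ℝ] V),
      (J₀ : V →ₗ[ℝ] V).baseChange ℂ v = Complex.I • v →
        (Jt t : V →ₗ[ℝ] V).baseChange ℂ ((Jt (t / 2) : V →ₗ[ℝ] V).baseChange ℂ v) =
          Complex.I • ((Jt (t / 2) : V →ₗ[ℝ] V).baseChange ℂ v)) := by
  let : NormedAlgebra ℚ (V →L[ℝ] V) := .restrictScalars ℚ ℝ (V →L[ℝ] V)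
  have hanti (s : ℝ) : SemiconjBy J₀ (s • M) (-(s • M)) := by
    rw [← smul_neg]
    exact SemiconjBy.smul_right (by rw [SemiconjBy, neg_mul, hM, neg_neg]) s
  have hexp (t : ℝ) : Jt t = exp ((2 * t) • M) * J₀ := by
    rw [hJt, exp_mul_mul_inverse_exp_of_semiconjBy_neg (hanti t), two_mul, add_smul]
  have hsquare (t : ℝ) : Jt t * J₀ = -exp ((2 * t) • M) := by
    rw [hexp, mul_assoc, hJ₀, mul_neg_one]
  have hintertwine (t : ℝ) : Jt (t / 2) * J₀ = Jt t * Jt (t / 2) := by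
    rw [hexp, hexp, mul_div_cancel₀ t two_ne_zero, two_mul, add_smul,
      exp_add_self_mul_mul_exp_mul_of_semiconjBy_neg (hanti t)]
  refine ⟨fun t ↦ ⟨hexp t, hsquare t⟩, hintertwine, fun t v hv ↦ ?_⟩
  refine LinearMap.baseChange_apply_eq_smul_of_comp_eq ?_ hv
  simpa only [ContinuousLinearMap.toLinearMap_mul, Module.End.mul_eq_comp]
    using congrArg ((↑) : (V →L[ℝ] V) → V →ₗ[ℝ] V) (hintertwine t)
end

section
/- Let (V, g) be a finite-dimensional real inner product space, J₀ a g-compatible complex structure on V, and A ∈ SO(V, g) (a linear isometry of g with det A = 1). Set J := A∘J₀∘A⁻¹ (so J is a g-compatible complex structure inducing the same orientation as J₀). Then det((J + J₀)/2) ≥ 0. -/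
/-!
Both `J₀` and `A J₀ A⁻¹` are skew-adjoint (an orthogonal `J₀` with `J₀² = -1` has
`J₀* = J₀⁻¹ = -J₀`, and conjugating by an isometry preserves this), hence so is their half sum.
A skew-adjoint `T` has nonnegative determinant: `⟪T x, x⟫ = 0` makes every `s • T + (1 - s) • id`
with `s < 1` injective, so if `T` is invertible the segment from `id` to `T` avoids the singular
maps and the intermediate value theorem forces `det T > 0`.
-/

open scoped RealInnerProductSpace

namespace LinearMap

section Segment

variable {M : Type*} [AddCommGroup M] [Module ℝ M] [FiniteDimensional ℝ M]

theorem continuous_det_smul_add_one_sub_smul (S T : M →ₗ[ℝ] M) :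
    Continuous fun s : ℝ => (s • T + (1 - s) • S).det := by
  let b := Module.finBasis ℝ M
  simp_rw [← det_toMatrix b, map_add, map_smul]
  fun_prop

theorem det_pos_of_forall_det_segment_ne_zero {T : M →ₗ[ℝ] M}
    (h : ∀ s ∈ Set.Icc (0 : ℝ) 1, (s • T + (1 - s) • id).det ≠ 0) : 0 < T.det := by
  by_contra! hT
  have hcont := (continuous_det_smul_add_one_sub_smul id T).continuousOn (s := Set.Icc 0 1)
  obtain ⟨s, hs, hs0⟩ := intermediate_value_Icc' zero_le_one hcont
    (by simpa using hT : (0 : ℝ) ∈ Set.Icc _ _)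
  exact h s hs hs0

end Segment

variable {V : Type*} [NormedAddCommGroup V] [InnerProductSpace ℝ V]

namespace IsSkewAdjoint

variable {T : V →ₗ[ℝ] V}

theorem inner_apply_self_eq_zero (hT : (innerₗ V).IsSkewAdjoint T) (x : V) : ⟪T x, x⟫ = 0 := by
  have h := hT x x
  simp only [innerₗ_apply_apply, Pi.neg_apply, inner_neg_right] at h
  linarith [real_inner_comm x (T x)]

theorem ker_smul_add_one_sub_smul_id_eq_bot (hT : (innerₗ V).IsSkewAdjoint T) {s : ℝ}
    (hs : s < 1) : ker (s • T + (1 - s) • id) = ⊥ := by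
  refine ker_eq_bot'.mpr fun x hx => ?_
  have : (1 - s) * ⟪x, x⟫ = 0 := by
    simpa [inner_add_left, real_inner_smul_left, hT.inner_apply_self_eq_zero]
      using congrArg (⟪·, x⟫) hx
  simpa [sub_ne_zero.mpr hs.ne'] using this

variable [FiniteDimensional ℝ V]

theorem det_pos_of_det_ne_zero (hT : (innerₗ V).IsSkewAdjoint T) (hdet : T.det ≠ 0) :
    0 < T.det := by
  refine det_pos_of_forall_det_segment_ne_zero fun s hs => ?_
  rcases hs.2.lt_or_eq with hs1 | rfl
  · exact fun h0 => det_eq_zero_iff_ker_ne_bot.mp h0 (hT.ker_smul_add_one_sub_smul_id_eq_bot hs1)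
  · simpa using hdet

theorem det_nonneg (hT : (innerₗ V).IsSkewAdjoint T) : 0 ≤ T.det := by
  rcases eq_or_ne T.det 0 with h | h
  · exact h.ge
  · exact (hT.det_pos_of_det_ne_zero h).le

end IsSkewAdjoint

theorem isSkewAdjoint_of_comp_self_eq_neg_id {J : V →ₗ[ℝ] V} (hJ : J ∘ₗ J = -id)
    (hJg : ∀ x y : V, ⟪J x, J y⟫ = ⟪x, y⟫) : (innerₗ V).IsSkewAdjoint J := fun x y => by
  have h := hJg x (J y)
  rw [← comp_apply J J, hJ] at h
  simp only [neg_apply, id_apply, inner_neg_right] at h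
  simp only [innerₗ_apply_apply, Pi.neg_apply, inner_neg_right]
  linarith

theorem isAdjointPair_of_isometry (A : V ≃ₗ[ℝ] V) (hA : ∀ x y : V, ⟪A x, A y⟫ = ⟪x, y⟫) :
    IsAdjointPair (innerₗ V) (innerₗ V) A A.symm := fun x y => by
  simpa using hA x (A.symm y)

theorem isAdjointPair_symm_of_isometry (A : V ≃ₗ[ℝ] V) (hA : ∀ x y : V, ⟪A x, A y⟫ = ⟪x, y⟫) :
    IsAdjointPair (innerₗ V) (innerₗ V) A.symm A := fun x y => by
  simpa using (hA (A.symm x) y).symm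

theorem IsSkewAdjoint.conj_isometry {T : V →ₗ[ℝ] V} (hT : (innerₗ V).IsSkewAdjoint T)
    (A : V ≃ₗ[ℝ] V) (hA : ∀ x y : V, ⟪A x, A y⟫ = ⟪x, y⟫) :
    (innerₗ V).IsSkewAdjoint ((A : V →ₗ[ℝ] V) ∘ₗ T ∘ₗ (A.symm : V →ₗ[ℝ] V)) := fun x y => by
  simpa using
    (((isAdjointPair_symm_of_isometry A hA).comp hT).comp (isAdjointPair_of_isometry A hA)) x y

end LinearMap

theorem det_halfSum_nonneg_of_so_conjugate_general
    {V : Type*} [NormedAddCommGroup V] [InnerProductSpace ℝ V] [FiniteDimensional ℝ V]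
    (J₀ : V →ₗ[ℝ] V)
    (hJ₀ : J₀ ∘ₗ J₀ = -LinearMap.id)
    (hJ₀g : ∀ x y : V, ⟪J₀ x, J₀ y⟫ = ⟪x, y⟫)
    (A : V ≃ₗ[ℝ] V)
    (hAg : ∀ x y : V, ⟪A x, A y⟫ = ⟪x, y⟫) :
    0 ≤ LinearMap.det
      ((2 : ℝ)⁻¹ • ((A : V →ₗ[ℝ] V) ∘ₗ J₀ ∘ₗ (A.symm : V →ₗ[ℝ] V) + J₀)) := by
  have hJ₀skew := LinearMap.isSkewAdjoint_of_comp_self_eq_neg_id hJ₀ hJ₀g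
  have hJskew := hJ₀skew.conj_isometry A hAg
  refine LinearMap.IsSkewAdjoint.det_nonneg ?_
  rw [← LinearMap.mem_skewAdjointSubmodule] at hJ₀skew hJskew ⊢
  exact Submodule.smul_mem _ _ (Submodule.add_mem _ hJskew hJ₀skew)

/-- Let `(V, g)` be a finite-dimensional real inner product space, `J₀` a
`g`-compatible complex structure on `V`, and `A ∈ SO(V, g)` (a linear isometry with `det A = 1`).
Set `J := A ∘ J₀ ∘ A⁻¹`.  Then `det ((J + J₀)/2) ≥ 0`. -/
theorem det_halfSum_nonneg_of_so_conjugate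
    {V : Type*} [NormedAddCommGroup V] [InnerProductSpace ℝ V] [FiniteDimensional ℝ V]
    (J₀ : V →ₗ[ℝ] V)
    (hJ₀ : J₀ ∘ₗ J₀ = -LinearMap.id)
    (hJ₀g : ∀ x y : V, ⟪J₀ x, J₀ y⟫ = ⟪x, y⟫)
    (A : V ≃ₗ[ℝ] V)
    (hAg : ∀ x y : V, ⟪A x, A y⟫ = ⟪x, y⟫)
    (hAdet : LinearMap.det (A : V →ₗ[ℝ] V) = 1) :
    0 ≤ LinearMap.det
      ((2 : ℝ)⁻¹ • ((A : V →ₗ[ℝ] V) ∘ₗ J₀ ∘ₗ (A.symm : V →ₗ[ℝ] V) + J₀)) :=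
  det_halfSum_nonneg_of_so_conjugate_general J₀ hJ₀ hJ₀g A hAg
end

section
/- Let G be a finite group and W a finite-dimensional complex vector space carrying a representation of G. Then W admits a G-invariant real structure (a conjugate-linear map R : W → W with R∘R = id_W commuting with the action of every element of G) if and only if there exists a nondegenerate G-invariant symmetric ℂ-bilinear form on W. -/
/-- A real structure on a complex vector space: a conjugate-linear involution. -/
def IsRealStructure {W : Type*} [AddCommGroup W] [Module ℂ W] (R : W → W) : Prop :=
  (∀ x y : W, R (x + y) = R x + R y) ∧
  (∀ (a : ℂ) (x : W), R (a • x) = (starRingEnd ℂ a) • R x) ∧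
  (∀ x : W, R (R x) = x)

/-!
Averaging over the finite group gives a `G`-invariant inner product. An invariant real
structure `R` then yields the form `B x y = ⟪R x, y⟫ + ⟪R y, x⟫`, nondegenerate because
`B x (R x) = ‖R x‖² + ‖x‖²`. Conversely, write `B x y = ⟪C x, y⟫` with `C` conjugate-linear and
`G`-equivariant; symmetry of `B` makes `C²` a positive operator, and the polar part
`R = (C²)^(-1/2) C` is an invariant real structure.
-/

open scoped InnerProductSpace

namespace LinearMap.IsSymmetric
variable {𝕜 E : Type*} [RCLike 𝕜] [NormedAddCommGroup E] [InnerProductSpace 𝕜 E]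
  [FiniteDimensional 𝕜 E] {T : E →ₗ[𝕜] E}

noncomputable def funCalc (hT : T.IsSymmetric) (f : ℝ → ℝ) : E →ₗ[𝕜] E :=
  (hT.eigenvectorBasis rfl).toBasis.constr 𝕜 fun i =>
    (f (hT.eigenvalues rfl i) : 𝕜) • hT.eigenvectorBasis rfl i

theorem induction_on_eigenvectors (hT : T.IsSymmetric) {p : E → Prop} (zero : p 0)
    (add : ∀ x y, p x → p y → p (x + y))
    (eigen : ∀ (r : ℝ) (v : E), T v = (r : 𝕜) • v → v ≠ 0 → p v) (x : E) : p x := by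
  rw [← (hT.eigenvectorBasis rfl).sum_repr x]
  refine Finset.sum_induction _ p add zero fun i _ => ?_
  by_cases hv : (hT.eigenvectorBasis rfl).repr x i • hT.eigenvectorBasis rfl i = 0
  · exact hv ▸ zero
  · refine eigen (hT.eigenvalues rfl i) _ ?_ hv
    rw [map_smul, hT.apply_eigenvectorBasis, smul_comm]

theorem funCalc_apply_of_apply_eq_smul (hT : T.IsSymmetric) (f : ℝ → ℝ) {r : ℝ} {v : E}
    (hv : T v = (r : 𝕜) • v) : hT.funCalc f v = (f r : 𝕜) • v := by
  set b := hT.eigenvectorBasis rfl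
  have hcoord : ∀ i, (hT.eigenvalues rfl i : 𝕜) * b.repr v i = r * b.repr v i := fun i => by
    rw [← hT.eigenvectorBasis_apply_self_apply, hv, map_smul]
    rfl
  conv_lhs => rw [← b.sum_repr v]
  conv_rhs => rw [← b.sum_repr v]
  rw [map_sum, Finset.smul_sum]
  refine Finset.sum_congr rfl fun i _ => ?_
  rw [map_smul, funCalc, ← b.coe_toBasis, Module.Basis.constr_basis, smul_comm]
  rcases eq_or_ne (b.repr v i) 0 with h | h
  · simp [h]
  · have : hT.eigenvalues rfl i = r := by exact_mod_cast mul_right_cancel₀ h (hcoord i)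
    rw [this]

theorem funCalc_commute (hT : T.IsSymmetric) (f : ℝ → ℝ) (A : E →+ E)
    (hA : ∀ (r : ℝ) (x : E), A ((r : 𝕜) • x) = (r : 𝕜) • A x) (hAT : ∀ x, A (T x) = T (A x))
    (x : E) : A (hT.funCalc f x) = hT.funCalc f (A x) := by
  induction x using hT.induction_on_eigenvectors with
  | zero => simp
  | add x y hx hy => rw [map_add, map_add, hx, hy, map_add, map_add]
  | eigen r v hv _ =>
    have hAv : T (A v) = (r : 𝕜) • A v := by rw [← hAT, hv, hA]
    rw [hT.funCalc_apply_of_apply_eq_smul f hv, hT.funCalc_apply_of_apply_eq_smul f hAv, hA]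

theorem funCalc_inv_sqrt_funCalc_inv_sqrt_apply (hT : T.IsSymmetric)
    (hpos : ∀ v, v ≠ 0 → 0 < RCLike.re ⟪T v, v⟫_𝕜) (x : E) :
    hT.funCalc (fun r => (√r)⁻¹) (hT.funCalc (fun r => (√r)⁻¹) (T x)) = x := by
  induction x using hT.induction_on_eigenvectors with
  | zero => simp
  | add x y hx hy => simp only [map_add, hx, hy]
  | eigen r v hv hv0 =>
    have hr : 0 < r := by
      have := hpos v hv0
      rw [hv, inner_smul_left, inner_self_eq_norm_sq_to_K, RCLike.conj_ofReal,
        ← RCLike.ofReal_pow, ← RCLike.ofReal_mul, RCLike.ofReal_re] at this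
      exact pos_of_mul_pos_left this (sq_nonneg _)
    rw [hv, map_smul, map_smul, hT.funCalc_apply_of_apply_eq_smul _ hv, map_smul,
      hT.funCalc_apply_of_apply_eq_smul _ hv, smul_smul, smul_smul]
    have hr_sqrt : r * ((√r)⁻¹ * (√r)⁻¹) = 1 := by
      rw [← mul_inv, Real.mul_self_sqrt hr.le, mul_inv_cancel₀ hr.ne']
    rw [mul_assoc, ← RCLike.ofReal_mul, ← RCLike.ofReal_mul, hr_sqrt, RCLike.ofReal_one, one_smul]

end LinearMap.IsSymmetric

section ConjLinear
variable {𝕜 E : Type*} [RCLike 𝕜] [NormedAddCommGroup E] [InnerProductSpace 𝕜 E]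
  [FiniteDimensional 𝕜 E]

theorem exists_conjLinear_inner_eq (B : LinearMap.BilinForm 𝕜 E) :
    ∃ C : E →ₗ⋆[𝕜] E, ∀ x y, ⟪C x, y⟫_𝕜 = B x y := by
  have := FiniteDimensional.complete 𝕜 E
  exact ⟨(InnerProductSpace.toDual 𝕜 E).symm.toLinearEquiv.toLinearMap.comp
      (LinearMap.toContinuousLinearMap.toLinearMap.comp B),
    fun x y => InnerProductSpace.toDual_symm_apply⟩

theorem exists_involutive_commute_of_inner_symm (C : E →ₗ⋆[𝕜] E) (hC : Function.Injective C)
    (hsymm : ∀ x y, ⟪C x, y⟫_𝕜 = ⟪C y, x⟫_𝕜) :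
    ∃ R : E →ₗ⋆[𝕜] E, Function.Involutive R ∧
      ∀ A : E →ₗ[𝕜] E, (∀ x, A (C x) = C (A x)) → ∀ x, R (A x) = A (R x) := by
  let P : E →ₗ[𝕜] E := C ∘ₛₗ C
  have hP : P.IsSymmetric := fun x y => by
    change ⟪C (C x), y⟫_𝕜 = ⟪x, C (C y)⟫_𝕜
    rw [hsymm, ← inner_conj_symm x, hsymm (C y), inner_conj_symm]
  have hPpos : ∀ v, v ≠ 0 → 0 < RCLike.re ⟪P v, v⟫_𝕜 := fun v hv => by
    change 0 < RCLike.re ⟪C (C v), v⟫_𝕜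
    rw [hsymm]
    exact re_inner_self_pos.mpr ((map_ne_zero_iff C hC).mpr hv)
  have hCreal : ∀ (r : ℝ) x, C ((r : 𝕜) • x) = (r : 𝕜) • C x := fun r x => by
    rw [C.map_smulₛₗ, RCLike.conj_ofReal]
  let S := hP.funCalc fun r => (√r)⁻¹
  have hCS : ∀ x, C (S x) = S (C x) :=
    hP.funCalc_commute _ C.toAddMonoidHom hCreal fun _ => rfl
  refine ⟨S ∘ₛₗ C, fun x => ?_, fun A hA x => ?_⟩
  · change S (C (S (C x))) = x
    rw [hCS]
    exact hP.funCalc_inv_sqrt_funCalc_inv_sqrt_apply hPpos x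
  · have hAP : ∀ x, A (P x) = P (A x) := fun x => by
      change A (C (C x)) = C (C (A x))
      rw [hA, hA]
    change S (C (A x)) = A (S (C x))
    rw [← hA]
    exact (hP.funCalc_commute _ A.toAddMonoidHom (fun r x => map_smul A _ x) hAP _).symm

end ConjLinear

section Invariant
variable {G 𝕜 W : Type*} [Group G] [RCLike 𝕜] [NormedAddCommGroup W] [InnerProductSpace 𝕜 W]
  {ρ : Representation 𝕜 G W}

theorem exists_invariant_symm_form_of_involutive
    (hρ : ∀ (s : G) (x y : W), ⟪ρ s x, ρ s y⟫_𝕜 = ⟪x, y⟫_𝕜) (R : W →ₗ⋆[𝕜] W)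
    (hR : Function.Involutive R) (hRρ : ∀ (s : G) (x : W), R (ρ s x) = ρ s (R x)) :
    ∃ B : LinearMap.BilinForm 𝕜 W,
      (∀ x y : W, B x y = B y x) ∧
      (∀ (s : G) (x y : W), B (ρ s x) (ρ s y) = B x y) ∧
      (∀ x : W, (∀ y : W, B x y = 0) → x = 0) := by
  let B₀ : LinearMap.BilinForm 𝕜 W := innerₛₗ 𝕜 ∘ₛₗ R
  have hB : ∀ x y, (B₀ + B₀.flip) x y = ⟪R x, y⟫_𝕜 + ⟪R y, x⟫_𝕜 := fun _ _ => rfl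
  refine ⟨B₀ + B₀.flip, fun x y => add_comm _ _, fun s x y => ?_, fun x hx => ?_⟩
  · simp only [hB, hRρ, hρ]
  · have hnorm : ‖R x‖ ^ 2 + ‖x‖ ^ 2 = 0 := by
      have h := hx (R x)
      rw [hB, hR x, inner_self_eq_norm_sq_to_K, inner_self_eq_norm_sq_to_K] at h
      exact_mod_cast h
    exact norm_eq_zero.mp (by nlinarith [norm_nonneg x, sq_nonneg ‖R x‖])

theorem exists_involutive_of_invariant_symm_form [FiniteDimensional 𝕜 W]
    (hρ : ∀ (s : G) (x y : W), ⟪ρ s x, ρ s y⟫_𝕜 = ⟪x, y⟫_𝕜) (B : LinearMap.BilinForm 𝕜 W)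
    (hsymm : ∀ x y : W, B x y = B y x) (hBρ : ∀ (s : G) (x y : W), B (ρ s x) (ρ s y) = B x y)
    (hnd : ∀ x : W, (∀ y : W, B x y = 0) → x = 0) :
    ∃ R : W →ₗ⋆[𝕜] W, Function.Involutive R ∧ ∀ (s : G) (x : W), R (ρ s x) = ρ s (R x) := by
  obtain ⟨C, hC⟩ := exists_conjLinear_inner_eq B
  have hCinj : Function.Injective C := (injective_iff_map_eq_zero C).mpr fun x hx =>
    hnd x fun y => by rw [← hC, hx, inner_zero_left]
  have hCρ : ∀ (s : G) (x : W), ρ s (C x) = C (ρ s x) := fun s x => ext_inner_right 𝕜 fun y =>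
    calc ⟪ρ s (C x), y⟫_𝕜 = ⟪ρ s (C x), ρ s (ρ s⁻¹ y)⟫_𝕜 := by rw [ρ.self_inv_apply]
      _ = B x (ρ s⁻¹ y) := by rw [hρ, hC]
      _ = ⟪C (ρ s x), y⟫_𝕜 := by rw [← hBρ s, ρ.self_inv_apply, hC]
  obtain ⟨R, hR, hRA⟩ :=
    exists_involutive_commute_of_inner_symm C hCinj fun x y => by rw [hC, hC, hsymm]
  exact ⟨R, hR, fun s => hRA (ρ s) (hCρ s)⟩

end Invariant

namespace Representation
variable {G 𝕜 W F : Type*} [Group G] [RCLike 𝕜] [AddCommGroup W] [Module 𝕜 W]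
  [NormedAddCommGroup F] [InnerProductSpace 𝕜 F]

-- The inner product pulled back along `ρ.orbitMap e` is the `G`-average of `⟪e ·, e ·⟫`.
def orbitMap (ρ : Representation 𝕜 G W) (e : W →ₗ[𝕜] F) : W →ₗ[𝕜] PiLp 2 fun _ : G => F :=
  (WithLp.linearEquiv 2 𝕜 (G → F)).symm.toLinearMap ∘ₗ LinearMap.pi fun s => e ∘ₗ ρ s

theorem orbitMap_injective (ρ : Representation 𝕜 G W) {e : W →ₗ[𝕜] F}
    (he : Function.Injective e) : Function.Injective (ρ.orbitMap e) := fun x y h => by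
  simpa using he (congrArg (fun v : PiLp 2 fun _ : G => F => v 1) h)

theorem inner_orbitMap_apply_apply [Fintype G] (ρ : Representation 𝕜 G W) (e : W →ₗ[𝕜] F)
    (t : G) (x y : W) :
    ⟪ρ.orbitMap e (ρ t x), ρ.orbitMap e (ρ t y)⟫_𝕜 = ⟪ρ.orbitMap e x, ρ.orbitMap e y⟫_𝕜 := by
  simp only [PiLp.inner_apply]
  refine Fintype.sum_equiv (Equiv.mulRight t) _ _ fun s => ?_
  simp [orbitMap, map_mul]

end Representation

theorem IsRealStructure.of_involutive {W : Type*} [AddCommGroup W] [Module ℂ W]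
    (R : W →ₗ⋆[ℂ] W) (hR : Function.Involutive R) : IsRealStructure R :=
  ⟨map_add R, R.map_smulₛₗ, hR⟩

def IsRealStructure.toLinearMap {W : Type*} [AddCommGroup W] [Module ℂ W] {R : W → W}
    (hR : IsRealStructure R) : W →ₗ⋆[ℂ] W where
  toFun := R
  map_add' := hR.1
  map_smul' := hR.2.1

/-- A finite-dimensional complex representation of a finite group `G` admits a
`G`-invariant real structure iff it admits a nondegenerate `G`-invariant symmetric bilinear
form. -/
theorem invariant_real_structure_iff_nondeg_invariant_symm_form
    {G : Type*} [Group G] [Finite G]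
    {W : Type*} [AddCommGroup W] [Module ℂ W] [FiniteDimensional ℂ W]
    (ρ : Representation ℂ G W) :
    (∃ R : W → W, IsRealStructure R ∧ ∀ (s : G) (x : W), R (ρ s x) = ρ s (R x)) ↔
      (∃ B : LinearMap.BilinForm ℂ W,
        (∀ x y : W, B x y = B y x) ∧
        (∀ (s : G) (x y : W), B (ρ s x) (ρ s y) = B x y) ∧
        (∀ x : W, (∀ y : W, B x y = 0) → x = 0)) := by
  have : Fintype G := Fintype.ofFinite G
  let e : W ≃ₗ[ℂ] EuclideanSpace ℂ (Fin (Module.finrank ℂ W)) :=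
    (Module.finBasis ℂ W).equivFun.trans (WithLp.linearEquiv 2 ℂ _).symm
  let f := ρ.orbitMap e.toLinearMap
  let _ : NormedAddCommGroup W :=
    NormedAddCommGroup.induced W _ f (ρ.orbitMap_injective e.injective)
  let _ : InnerProductSpace ℂ W := InnerProductSpace.induced f
  have hρ : ∀ (s : G) (x y : W), ⟪ρ s x, ρ s y⟫_ℂ = ⟪x, y⟫_ℂ := ρ.inner_orbitMap_apply_apply _
  constructor
  · rintro ⟨R, hR, hRρ⟩
    exact exists_invariant_symm_form_of_involutive hρ hR.toLinearMap hR.2.2 hRρ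
  · rintro ⟨B, hsymm, hBρ, hnd⟩
    obtain ⟨R, hR, hRρ⟩ := exists_involutive_of_invariant_symm_form hρ B hsymm hBρ hnd
    exact ⟨R, .of_involutive R hR, hRρ⟩
end

section
/- Let G be a finite group and W a finite-dimensional complex vector space carrying a representation of G. Then there exists a nonzero G-invariant complex subspace W' ⊆ W such that the subrepresentation W' admits a G-invariant real structure if and only if there exists a nonzero (possibly degenerate) G-invariant symmetric ℂ-bilinear form on W. -/
/-!
Fix a `G`-invariant positive definite sesquilinear form `h` on `W` (the average over `G` of any
positive definite one).

A real structure `R` on a nonzero invariant subspace `W'`, extended conjugate-linearly to `W`,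
gives the bilinear form `h (R x) y + h (R y) x`; its average over `G` is symmetric, invariant,
and positive at `(x, R x)` for `0 ≠ x ∈ W'`.

Conversely, a nonzero invariant symmetric form `B` is `h (C x) y` for a conjugate-linear,
equivariant `C ≠ 0`. Then `C ∘ C` is linear with `h (C (C x)) x = h (C x) (C x)`, so it has an
eigenvalue `μ > 0`, and `C / √μ` is a real structure on the `μ`-eigenspace.
-/

open Module
open scoped ComplexOrder

namespace Representation

section Average

variable {k G M P : Type*} [CommSemiring k] [Group G] [Fintype G]
  [AddCommMonoid M] [Module k M] [AddCommMonoid P] [Module k P] {σ : k →+* k}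
  (ρ : Representation k G M)

def averageForm (f : M →ₛₗ[σ] M →ₗ[k] P) : M →ₛₗ[σ] M →ₗ[k] P :=
  ∑ s, (f ∘ₛₗ ρ s).compl₂ (ρ s)

@[simp]
theorem averageForm_apply (f : M →ₛₗ[σ] M →ₗ[k] P) (x y : M) :
    ρ.averageForm f x y = ∑ s, f (ρ s x) (ρ s y) := by
  simp [averageForm]

theorem averageForm_invariant (f : M →ₛₗ[σ] M →ₗ[k] P) (t : G) (x y : M) :
    ρ.averageForm f (ρ t x) (ρ t y) = ρ.averageForm f x y := by
  simp only [averageForm_apply, ← Module.End.mul_apply, ← map_mul]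
  exact Fintype.sum_equiv (Equiv.mulRight t) _ _ fun _ => rfl

theorem averageForm_apply_self_pos [PartialOrder P] [IsOrderedCancelAddMonoid P]
    (f : M →ₛₗ[σ] M →ₗ[k] P) (hf : ∀ x, x ≠ 0 → 0 < f x x) {x : M} (hx : x ≠ 0) :
    0 < ρ.averageForm f x x := by
  rw [averageForm_apply]
  refine Finset.sum_pos' (fun s _ => ?_) ⟨1, Finset.mem_univ _, by simpa using hf x hx⟩
  by_cases hs : ρ s x = 0
  · simp [hs]
  · exact (hf _ hs).le

end Average

structure IsInvariantRealStructure {G W : Type*} [Group G] [AddCommGroup W] [Module ℂ W]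
    (ρ : Representation ℂ G W) (W' : Submodule ℂ W) (R : W → W) : Prop where
  mapsTo : ∀ x ∈ W', R x ∈ W'
  map_add : ∀ x ∈ W', ∀ y ∈ W', R (x + y) = R x + R y
  map_smul : ∀ (a : ℂ), ∀ x ∈ W', R (a • x) = starRingEnd ℂ a • R x
  involutive : ∀ x ∈ W', R (R x) = x
  commute : ∀ (s : G), ∀ x ∈ W', R (ρ s x) = ρ s (R x)

end Representation

theorem Submodule.exists_semilinearMap_eqOn {K V V₂ : Type*} [DivisionRing K] [AddCommGroup V]
    [Module K V] [AddCommGroup V₂] [Module K V₂] {σ : K →+* K} (p : Submodule K V) (f : V → V₂)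
    (hadd : ∀ x ∈ p, ∀ y ∈ p, f (x + y) = f x + f y)
    (hsmul : ∀ (a : K), ∀ x ∈ p, f (a • x) = σ a • f x) :
    ∃ g : V →ₛₗ[σ] V₂, ∀ x ∈ p, g x = f x := by
  obtain ⟨π, hπ⟩ := LinearMap.exists_leftInverse_of_injective p.subtype p.ker_subtype
  let fp : p →ₛₗ[σ] V₂ :=
    { toFun := fun x => f x
      map_add' := fun x y => hadd _ x.2 _ y.2
      map_smul' := fun a x => hsmul a _ x.2 }
  refine ⟨fp ∘ₛₗ π, fun x hx => ?_⟩
  have : π x = ⟨x, hx⟩ := LinearMap.congr_fun hπ ⟨x, hx⟩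
  simp [fp, this]

theorem exists_posDef_sesqForm (W : Type*) [AddCommGroup W] [Module ℂ W] [FiniteDimensional ℂ W] :
    ∃ h : W →ₗ⋆[ℂ] W →ₗ[ℂ] ℂ, ∀ x, x ≠ 0 → 0 < h x x := by
  let e : W ≃ₗ[ℂ] EuclideanSpace ℂ (Fin (finrank ℂ W)) :=
    LinearEquiv.ofFinrankEq _ _ finrank_euclideanSpace_fin.symm
  refine ⟨(innerₛₗ ℂ ∘ₛₗ e.toLinearMap).compl₂ e.toLinearMap, fun x hx => ?_⟩
  have hex : 0 < ‖e x‖ := norm_pos_iff.mpr (e.map_ne_zero_iff.mpr hx)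
  simp only [LinearMap.compl₂_apply, LinearMap.comp_apply, innerₛₗ_apply_apply,
    inner_self_eq_norm_sq_to_K]
  positivity

section

variable {G W : Type*} [Group G] [AddCommGroup W] [Module ℂ W]

theorem Representation.isInvariantRealStructure_eigenspace (ρ : Representation ℂ G W)
    (C : W →ₗ⋆[ℂ] W) (hCρ : ∀ s x, C (ρ s x) = ρ s (C x)) {μ : ℝ} (hμ : 0 < μ) :
    ρ.IsInvariantRealStructure (Module.End.eigenspace (C ∘ₛₗ C) μ)
      (((√μ : ℝ) : ℂ)⁻¹ • C : W →ₗ⋆[ℂ] W) where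
  mapsTo x hx := by
    rw [Module.End.mem_eigenspace_iff, LinearMap.comp_apply] at hx ⊢
    simp only [LinearMap.smul_apply, LinearMap.map_smulₛₗ, hx, Complex.conj_conj,
      Complex.conj_ofReal, smul_comm (μ : ℂ)]
  map_add x _ y _ := map_add _ x y
  map_smul a x _ := LinearMap.map_smulₛₗ _ a x
  involutive x hx := by
    rw [Module.End.mem_eigenspace_iff, LinearMap.comp_apply] at hx
    have hsqrt : ((√μ : ℝ) : ℂ)⁻¹ * (((√μ : ℝ) : ℂ)⁻¹ * μ) = 1 := by
      rw [← mul_assoc, ← mul_inv, ← Complex.ofReal_mul, Real.mul_self_sqrt hμ.le]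
      exact inv_mul_cancel₀ (by exact_mod_cast hμ.ne')
    simp only [LinearMap.smul_apply, LinearMap.map_smulₛₗ, hx, map_inv₀, Complex.conj_ofReal,
      smul_smul, hsqrt, one_smul]
  commute s x _ := by simp [hCρ]

variable [FiniteDimensional ℂ W]

theorem Representation.exists_invariant_posDef_sesqForm [Finite G] (ρ : Representation ℂ G W) :
    ∃ h : W →ₗ⋆[ℂ] W →ₗ[ℂ] ℂ,
      (∀ x, x ≠ 0 → 0 < h x x) ∧ ∀ s x y, h (ρ s x) (ρ s y) = h x y := by
  have := Fintype.ofFinite G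
  obtain ⟨h, hpos⟩ := exists_posDef_sesqForm W
  exact ⟨ρ.averageForm h, fun x hx => ρ.averageForm_apply_self_pos h hpos hx,
    ρ.averageForm_invariant h⟩

theorem LinearMap.bijective_of_apply_self_ne_zero (h : W →ₗ⋆[ℂ] W →ₗ[ℂ] ℂ)
    (hh : ∀ x, x ≠ 0 → h x x ≠ 0) : Function.Bijective h := by
  have hinj : Function.Injective h := by
    refine (injective_iff_map_eq_zero h).mpr fun x hx => ?_
    by_contra hx0
    exact hh x hx0 (by simp [hx])
  -- over `ℝ`, `h` is linear between spaces of the same dimension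
  let hℝ : W →ₗ[ℝ] Module.Dual ℂ W :=
    { toFun := h
      map_add' := map_add h
      map_smul' := fun r x => by simp [← Complex.coe_smul] }
  refine ⟨hinj, (LinearMap.injective_iff_surjective_of_finrank_eq_finrank (f := hℝ) ?_).mp hinj⟩
  rw [finrank_real_of_complex, finrank_real_of_complex, Subspace.dual_finrank_eq]

theorem LinearMap.exists_conjLinear_comp_eq (h : W →ₗ⋆[ℂ] W →ₗ[ℂ] ℂ)
    (hh : ∀ x, x ≠ 0 → h x x ≠ 0) (B : LinearMap.BilinForm ℂ W) :
    ∃ C : W →ₗ⋆[ℂ] W, h ∘ₛₗ C = B := by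
  let e := LinearEquiv.ofBijective h (h.bijective_of_apply_self_ne_zero hh)
  exact ⟨e.symm.toLinearMap ∘ₛₗ B, by ext; simp [e]⟩

theorem exists_pos_eigenvalue_comp_self (h : W →ₗ⋆[ℂ] W →ₗ[ℂ] ℂ)
    (hpos : ∀ x, x ≠ 0 → 0 < h x x) (C : W →ₗ⋆[ℂ] W) (hC0 : C ≠ 0)
    (hC : ∀ x y, h (C x) y = h (C y) x) :
    ∃ μ : ℝ, 0 < μ ∧ Module.End.HasEigenvalue (C ∘ₛₗ C) μ := by
  set P : Module.End ℂ W := C ∘ₛₗ C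
  have hPh : ∀ x y, h (P x) y = h (C y) (C x) := fun x y => hC (C x) y
  have hCP : ∀ x, P x = 0 → C x = 0 := fun x hx => by
    by_contra hCx
    exact (hpos _ hCx).ne' (by rw [← hPh, hx, map_zero, LinearMap.zero_apply])
  have : Nontrivial (LinearMap.range P) := by
    obtain ⟨x, hx⟩ : ∃ x, C x ≠ 0 := by
      by_contra! hC'
      exact hC0 (LinearMap.ext hC')
    exact ⟨⟨⟨P x, x, rfl⟩, 0, fun hPx => hx (hCP x (congrArg Subtype.val hPx))⟩⟩
  -- an eigenvector `v = P w` inside the range of `P` has a nonzero eigenvalue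
  obtain ⟨μ, hμ⟩ := Module.End.exists_eigenvalue (P.restrict fun x _ => LinearMap.mem_range_self P x)
  obtain ⟨⟨_, w, rfl⟩, hv⟩ := hμ.exists_hasEigenvector
  have hPv : P (P w) = μ • P w := congrArg Subtype.val hv.apply_eq_smul
  have hv0 : P w ≠ 0 := fun h0 => hv.2 (Subtype.ext h0)
  have hCv : C (P w) ≠ 0 := by
    intro hCv
    refine (hpos _ hv0).ne' ?_
    rw [hPh, hCv, map_zero, LinearMap.zero_apply]
  have hμ0 : μ ≠ 0 := by
    rintro rfl
    exact hCv (hCP _ (by rw [hPv, zero_smul]))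
  have hconj : 0 < starRingEnd ℂ μ := by
    have : starRingEnd ℂ μ * h (P w) (P w) = h (C (P w)) (C (P w)) := by
      rw [← hPh, hPv, LinearMap.map_smulₛₗ, LinearMap.smul_apply, smul_eq_mul]
    rw [← eq_div_iff (hpos _ hv0).ne'] at this
    exact this ▸ div_pos (hpos _ hCv) (hpos _ hv0)
  obtain ⟨hre, him⟩ := Complex.pos_iff.mp hconj
  refine ⟨μ.re, by simpa using hre, Module.End.hasEigenvalue_of_hasEigenvector ⟨?_, hv0⟩⟩
  have hμre : (μ.re : ℂ) = μ := Complex.ext rfl (by simpa [eq_comm] using him)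
  rw [Module.End.mem_eigenspace_iff, hμre]
  exact hPv

variable [Finite G]

theorem exists_invariant_symm_form_of_isInvariantRealStructure (ρ : Representation ℂ G W)
    {W' : Submodule ℂ W} (hW' : W' ≠ ⊥) (hρW' : ∀ s, ∀ x ∈ W', ρ s x ∈ W') {R : W → W}
    (hR : ρ.IsInvariantRealStructure W' R) :
    ∃ B : LinearMap.BilinForm ℂ W, B ≠ 0 ∧ (∀ x y, B x y = B y x) ∧
      ∀ s x y, B (ρ s x) (ρ s y) = B x y := by
  have := Fintype.ofFinite G
  obtain ⟨S, hS⟩ := W'.exists_semilinearMap_eqOn R hR.map_add hR.map_smul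
  obtain ⟨h, hpos, hρh⟩ := ρ.exists_invariant_posDef_sesqForm
  obtain ⟨x, hxW', hx⟩ := W'.ne_bot_iff.mp hW'
  let F : LinearMap.BilinForm ℂ W := h ∘ₛₗ S
  refine ⟨ρ.averageForm (F + F.flip), fun hB => ?_, fun y z => ?_, ρ.averageForm_invariant _⟩
  · have hterm : ∀ s, (F + F.flip) (ρ s x) (ρ s (R x)) = h (R x) (R x) + h x x := fun s => by
      simp [F, hS _ (hρW' s x hxW'), hS _ (hρW' s _ (hR.mapsTo x hxW')), hR.commute _ _ hxW',
        hR.commute _ _ (hR.mapsTo x hxW'), hR.involutive x hxW', hρh]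
    have hnonneg : 0 ≤ h (R x) (R x) := by
      by_cases hRx : R x = 0
      · simp [hRx]
      · exact (hpos _ hRx).le
    have : 0 < ρ.averageForm (F + F.flip) x (R x) := by
      simp only [Representation.averageForm_apply, hterm]
      exact Finset.sum_pos (fun s _ => add_pos_of_nonneg_of_pos hnonneg (hpos x hx))
        Finset.univ_nonempty
    simp [hB] at this
  · simp only [Representation.averageForm_apply, LinearMap.add_apply]
    exact Finset.sum_congr rfl fun s _ => add_comm _ _

theorem exists_isInvariantRealStructure_of_invariant_symm_form (ρ : Representation ℂ G W)
    (B : LinearMap.BilinForm ℂ W) (hB0 : B ≠ 0) (hBsymm : ∀ x y, B x y = B y x)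
    (hBρ : ∀ s x y, B (ρ s x) (ρ s y) = B x y) :
    ∃ W' : Submodule ℂ W, W' ≠ ⊥ ∧ (∀ s, ∀ x ∈ W', ρ s x ∈ W') ∧
      ∃ R : W → W, ρ.IsInvariantRealStructure W' R := by
  obtain ⟨h, hpos, hρh⟩ := ρ.exists_invariant_posDef_sesqForm
  have hh : ∀ x, x ≠ 0 → h x x ≠ 0 := fun x hx => (hpos x hx).ne'
  obtain ⟨C, hCB⟩ := h.exists_conjLinear_comp_eq hh B
  have hhC : ∀ x y, h (C x) y = B x y := fun x y => by rw [← hCB]; rfl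
  have hCρ : ∀ s x, C (ρ s x) = ρ s (C x) := fun s x =>
    (h.bijective_of_apply_self_ne_zero hh).1 <| LinearMap.ext fun y => by
      rw [← ρ.self_inv_apply s y, hhC, hBρ, ← hhC, hρh]
  have hC0 : C ≠ 0 := by
    rintro rfl
    exact hB0 (by simp [← hCB])
  obtain ⟨μ, hμ, hμC⟩ :=
    exists_pos_eigenvalue_comp_self h hpos C hC0 fun x y => by rw [hhC, hhC, hBsymm]
  refine ⟨_, hμC, fun s x hx => ?_, _, ρ.isInvariantRealStructure_eigenspace C hCρ hμ⟩
  refine Module.End.mapsTo_genEigenspace_of_comm ?_ _ 1 hx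
  exact LinearMap.ext fun y => by simp [hCρ]

end

/-- For a finite-dimensional complex representation `W` of a finite group `G`,
there is a nonzero `G`-invariant subspace `W' ⊆ W` carrying a `G`-invariant real structure
(a conjugate-linear involution of `W'` commuting with the `G`-action) iff there is a nonzero
(possibly degenerate) `G`-invariant symmetric bilinear form on `W`. -/
theorem exists_real_type_subrep_iff_exists_invariant_symm_form
    {G : Type*} [Group G] [Finite G]
    {W : Type*} [AddCommGroup W] [Module ℂ W] [FiniteDimensional ℂ W]
    (ρ : Representation ℂ G W) :
    (∃ W' : Submodule ℂ W, W' ≠ ⊥ ∧ (∀ (s : G), ∀ x ∈ W', ρ s x ∈ W') ∧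
      ∃ R : W → W,
        (∀ x ∈ W', R x ∈ W') ∧
        (∀ x ∈ W', ∀ y ∈ W', R (x + y) = R x + R y) ∧
        (∀ (a : ℂ), ∀ x ∈ W', R (a • x) = (starRingEnd ℂ a) • R x) ∧
        (∀ x ∈ W', R (R x) = x) ∧
        (∀ (s : G), ∀ x ∈ W', R (ρ s x) = ρ s (R x))) ↔
      (∃ B : LinearMap.BilinForm ℂ W, B ≠ 0 ∧
        (∀ x y : W, B x y = B y x) ∧
        (∀ (s : G) (x y : W), B (ρ s x) (ρ s y) = B x y)) := by
  constructor
  · rintro ⟨W', hW', hρW', R, hRW', hadd, hsmul, hinv, hcomm⟩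
    exact exists_invariant_symm_form_of_isInvariantRealStructure ρ hW' hρW'
      ⟨hRW', hadd, hsmul, hinv, hcomm⟩
  · rintro ⟨B, hB0, hBsymm, hBρ⟩
    obtain ⟨W', hW', hρW', R, hR⟩ :=
      exists_isInvariantRealStructure_of_invariant_symm_form ρ B hB0 hBsymm hBρ
    exact ⟨W', hW', hρW', R, hR.mapsTo, hR.map_add, hR.map_smul, hR.involutive, hR.commute⟩
end

section
/- Let G be a finite group and W a finite-dimensional complex vector space carrying a representation of G. Then there exists a nonzero G-invariant complex subspace W' ⊆ W such that the subrepresentation W' admits a G-invariant quaternionic structure if and only if there exists a nonzero (possibly degenerate) G-invariant alternating ℂ-bilinear form on W. -/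
/-!
Averaging an inner product over `G` makes `ρ` unitary. A quaternionic structure `Q` on an invariant
subspace `W'`, precomposed with the orthogonal projection onto `W'`, becomes an equivariant
conjugate-linear map `J` of `W`, and `⟪J x, y⟫ - ⟪J y, x⟫` is an invariant alternating form taking
the value `‖Q x‖² + ‖x‖²` at `(x, Q x)`.

Conversely, by the Riesz representation an invariant alternating form is `B x y = ⟪T x, y⟫` for an
equivariant conjugate-linear `T`. Alternation makes `-T²` self-adjoint with `⟪x, -T² x⟫ = ‖T x‖²`,
so it has an eigenvalue `μ > 0`, and `μ^(-1/2) • T` is a quaternionic structure on the (invariant)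
`μ`-eigenspace.
-/

open scoped InnerProductSpace ComplexConjugate

lemma Module.End.apply_mem_eigenspace_of_comm {R M : Type*} [CommRing R] [AddCommGroup M]
    [Module R M] {σ : R →+* R} {f : Module.End R M} {J : M →ₛₗ[σ] M}
    (hJ : ∀ x, f (J x) = J (f x)) {μ : R} {x : M} (hx : x ∈ f.eigenspace μ) :
    J x ∈ f.eigenspace (σ μ) := by
  rw [Module.End.mem_eigenspace_iff] at hx ⊢
  rw [hJ, hx, map_smulₛₗ]

lemma LinearMap.IsSymmetric.exists_hasEigenvalue_ne_zero {𝕜 E : Type*} [RCLike 𝕜]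
    [NormedAddCommGroup E] [InnerProductSpace 𝕜 E] [FiniteDimensional 𝕜 E] {T : E →ₗ[𝕜] E}
    (hT : T.IsSymmetric) (h : T ≠ 0) : ∃ μ : ℝ, μ ≠ 0 ∧ Module.End.HasEigenvalue T μ := by
  by_contra! hzero
  refine h ((hT.eigenvectorBasis rfl).toBasis.ext fun i => ?_)
  have : hT.eigenvalues rfl i = 0 := by
    by_contra hne
    exact hzero _ hne (hT.hasEigenvalue_eigenvalues rfl i)
  simp [hT.apply_eigenvectorBasis, this]

section SkewInnerForm

variable {E : Type*} [NormedAddCommGroup E] [InnerProductSpace ℂ E]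

noncomputable def skewInnerForm (J : E →ₗ⋆[ℂ] E) : LinearMap.BilinForm ℂ E :=
  innerₛₗ ℂ ∘ₛₗ J - (innerₛₗ ℂ ∘ₛₗ J).flip

lemma skewInnerForm_apply (J : E →ₗ⋆[ℂ] E) (x y : E) :
    skewInnerForm J x y = ⟪J x, y⟫_ℂ - ⟪J y, x⟫_ℂ := rfl

lemma skewInnerForm_isAlt (J : E →ₗ⋆[ℂ] E) : (skewInnerForm J).IsAlt := fun x => by
  rw [skewInnerForm_apply, sub_self]

end SkewInnerForm

namespace LinearMap.BilinForm

variable {E : Type*} [NormedAddCommGroup E] [InnerProductSpace ℂ E] [FiniteDimensional ℂ E]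

noncomputable def rieszConj (B : LinearMap.BilinForm ℂ E) : E →ₗ⋆[ℂ] E :=
  (InnerProductSpace.toDual ℂ E).symm.toLinearEquiv.toLinearMap ∘ₛₗ
    (LinearMap.toContinuousLinearMap.toLinearMap ∘ₗ B)

lemma inner_rieszConj_apply (B : LinearMap.BilinForm ℂ E) (x y : E) :
    ⟪B.rieszConj x, y⟫_ℂ = B x y := by
  simp [rieszConj, InnerProductSpace.toDual_symm_apply]

lemma IsAlt.inner_rieszConj_rieszConj_apply {B : LinearMap.BilinForm ℂ E} (hB : B.IsAlt)
    (x y : E) : ⟪B.rieszConj (B.rieszConj x), y⟫_ℂ = -⟪B.rieszConj y, B.rieszConj x⟫_ℂ := by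
  rw [inner_rieszConj_apply, inner_rieszConj_apply, hB.neg_eq]

lemma IsAlt.isSymmetric_neg_rieszConj_comp_rieszConj {B : LinearMap.BilinForm ℂ E}
    (hB : B.IsAlt) : (-(B.rieszConj ∘ₛₗ B.rieszConj)).IsSymmetric := fun x y => by
  rw [← inner_conj_symm x]
  simp only [LinearMap.neg_apply, LinearMap.comp_apply, inner_neg_left,
    hB.inner_rieszConj_rieszConj_apply, neg_neg, inner_conj_symm]

lemma IsAlt.inner_neg_rieszConj_comp_rieszConj_self {B : LinearMap.BilinForm ℂ E}
    (hB : B.IsAlt) (x : E) :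
    ⟪x, (-(B.rieszConj ∘ₛₗ B.rieszConj)) x⟫_ℂ = ⟪B.rieszConj x, B.rieszConj x⟫_ℂ := by
  rw [← inner_conj_symm]
  simp only [LinearMap.neg_apply, LinearMap.comp_apply, inner_neg_left,
    hB.inner_rieszConj_rieszConj_apply, neg_neg, inner_conj_symm]

end LinearMap.BilinForm

namespace Representation

variable {G E : Type*} [Group G]

section Module

variable [AddCommGroup E] [Module ℂ E]

def HasQuaternionicSubrep (ρ : Representation ℂ G E) : Prop :=
  ∃ K : Submodule ℂ E, K ≠ ⊥ ∧ (∀ g, ∀ x ∈ K, ρ g x ∈ K) ∧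
    ∃ Q : E → E,
      (∀ x ∈ K, Q x ∈ K) ∧
      (∀ x ∈ K, ∀ y ∈ K, Q (x + y) = Q x + Q y) ∧
      (∀ (a : ℂ), ∀ x ∈ K, Q (a • x) = conj a • Q x) ∧
      (∀ x ∈ K, Q (Q x) = -x) ∧
      (∀ g, ∀ x ∈ K, Q (ρ g x) = ρ g (Q x))

def HasInvariantAltForm (ρ : Representation ℂ G E) : Prop :=
  ∃ B : LinearMap.BilinForm ℂ E, B ≠ 0 ∧ B.IsAlt ∧ ∀ g x y, B (ρ g x) (ρ g y) = B x y

/-- The quaternionic structure is `μ^(-1/2) • T` on the `μ`-eigenspace of `-T²`. -/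
theorem hasQuaternionicSubrep_of_hasEigenvalue {ρ : Representation ℂ G E} {T : E →ₗ⋆[ℂ] E}
    (hTρ : ∀ g x, T (ρ g x) = ρ g (T x)) {μ : ℝ} (hμ : 0 < μ)
    (hTμ : Module.End.HasEigenvalue (-(T ∘ₛₗ T)) μ) : ρ.HasQuaternionicSubrep := by
  set N : E →ₗ[ℂ] E := -(T ∘ₛₗ T)
  have hNT : ∀ x, N (T x) = T (N x) := fun x => by simp [N]
  have hNρ : ∀ g x, N (ρ g x) = ρ g (N x) := fun g x => by simp [N, hTρ]
  set c : ℂ := (((Real.sqrt μ)⁻¹ : ℝ) : ℂ)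
  have hc : c * conj c * μ = 1 := by
    rw [Complex.conj_ofReal, ← Complex.ofReal_mul, ← Complex.ofReal_mul, ← mul_inv,
      Real.mul_self_sqrt hμ.le, inv_mul_cancel₀ hμ.ne', Complex.ofReal_one]
  refine ⟨Module.End.eigenspace N μ, Module.End.hasEigenvalue_iff.1 hTμ,
    fun g x hx => Module.End.apply_mem_eigenspace_of_comm (J := ρ g) (hNρ g) hx,
    ⇑(c • T), fun x hx => ?_, fun x _ y _ => map_add (c • T) x y,
    fun a x _ => map_smulₛₗ (c • T) a x, fun x hx => ?_,
    fun g x _ => by rw [LinearMap.smul_apply, LinearMap.smul_apply, hTρ, map_smul]⟩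
  · have hTx := Module.End.apply_mem_eigenspace_of_comm (J := T) hNT hx
    rw [Complex.conj_ofReal] at hTx
    exact (Module.End.eigenspace N μ).smul_mem c hTx
  · have hTT : T (T x) = -((μ : ℂ) • x) := by
      rw [← Module.End.mem_eigenspace_iff.1 hx]
      simp [N]
    rw [LinearMap.smul_apply, LinearMap.smul_apply, map_smulₛₗ, hTT, smul_smul, smul_neg,
      smul_smul, hc, one_smul]

end Module

section Averaging

variable [Fintype G] [AddCommGroup E] [Module ℂ E]
  {F : Type*} [NormedAddCommGroup F] [InnerProductSpace ℂ F]

noncomputable abbrev averagedInnerCore (ρ : Representation ℂ G E) (e : E →ₗ[ℂ] F)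
    (he : Function.Injective e) : InnerProductSpace.Core ℂ E where
  inner x y := ∑ g, ⟪e (ρ g x), e (ρ g y)⟫_ℂ
  conj_inner_symm x y := by simp
  re_inner_nonneg x := by
    rw [map_sum]
    exact Finset.sum_nonneg fun g _ => inner_self_nonneg
  add_left x y z := by simp [Finset.sum_add_distrib]
  smul_left x y r := by simp only [map_smul, inner_smul_left, Finset.mul_sum]
  definite x hx := by
    have hre := congrArg (RCLike.re (K := ℂ)) hx
    rw [map_sum, map_zero, Finset.sum_eq_zero_iff_of_nonneg fun g _ => inner_self_nonneg] at hre
    have := re_inner_self_nonpos.1 (hre 1 (Finset.mem_univ 1)).le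
    simpa using he (by simpa using this : e x = e 0)

lemma averagedInnerCore_inner_apply_apply (ρ : Representation ℂ G E) (e : E →ₗ[ℂ] F)
    (he : Function.Injective e) (h : G) (x y : E) :
    (ρ.averagedInnerCore e he).inner (ρ h x) (ρ h y) = (ρ.averagedInnerCore e he).inner x y := by
  change ∑ g, ⟪e (ρ g (ρ h x)), e (ρ g (ρ h y))⟫_ℂ = ∑ g, ⟪e (ρ g x), e (ρ g y)⟫_ℂ
  simp only [← Module.End.mul_apply, ← map_mul]
  exact Fintype.sum_equiv (Equiv.mulRight h) _ _ fun g => rfl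

end Averaging

variable [NormedAddCommGroup E] [InnerProductSpace ℂ E] {ρ : Representation ℂ G E}

def IsUnitary (ρ : Representation ℂ G E) : Prop :=
  ∀ g x y, ⟪ρ g x, ρ g y⟫_ℂ = ⟪x, y⟫_ℂ

namespace IsUnitary

lemma inner_apply_left (hρ : ρ.IsUnitary) (g : G) (x y : E) :
    ⟪ρ g x, y⟫_ℂ = ⟪x, ρ g⁻¹ y⟫_ℂ := by
  rw [← hρ g x (ρ g⁻¹ y), self_inv_apply]

lemma starProjection_apply (hρ : ρ.IsUnitary) {K : Submodule ℂ E} [K.HasOrthogonalProjection]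
    (hK : ∀ g, ∀ x ∈ K, ρ g x ∈ K) (g : G) (x : E) :
    K.starProjection (ρ g x) = ρ g (K.starProjection x) := by
  refine K.eq_starProjection_of_mem_of_inner_eq_zero (hK g _ (K.starProjection_apply_mem x))
    fun w hw => ?_
  rw [← map_sub, hρ.inner_apply_left, K.starProjection_inner_eq_zero x _ (hK _ _ hw)]

lemma skewInnerForm_apply_apply {J : E →ₗ⋆[ℂ] E} (hρ : ρ.IsUnitary)
    (hJ : ∀ g x, J (ρ g x) = ρ g (J x)) (g : G) (x y : E) :
    skewInnerForm J (ρ g x) (ρ g y) = skewInnerForm J x y := by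
  simp only [skewInnerForm_apply, hJ, hρ g]

lemma rieszConj_apply_apply [FiniteDimensional ℂ E] {B : LinearMap.BilinForm ℂ E}
    (hρ : ρ.IsUnitary) (hB : ∀ g x y, B (ρ g x) (ρ g y) = B x y) (g : G) (x : E) :
    B.rieszConj (ρ g x) = ρ g (B.rieszConj x) := by
  refine ext_inner_right ℂ fun y => ?_
  rw [LinearMap.BilinForm.inner_rieszConj_apply, hρ.inner_apply_left,
    LinearMap.BilinForm.inner_rieszConj_apply, ← hB g x (ρ g⁻¹ y), self_inv_apply]

lemma exists_conjLinear_extension [FiniteDimensional ℂ E] (hρ : ρ.IsUnitary)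
    {K : Submodule ℂ E} (hK : ∀ g, ∀ x ∈ K, ρ g x ∈ K) {Q : E → E}
    (hQadd : ∀ x ∈ K, ∀ y ∈ K, Q (x + y) = Q x + Q y)
    (hQsmul : ∀ (a : ℂ), ∀ x ∈ K, Q (a • x) = conj a • Q x)
    (hQρ : ∀ g, ∀ x ∈ K, Q (ρ g x) = ρ g (Q x)) :
    ∃ J : E →ₗ⋆[ℂ] E, (∀ x ∈ K, J x = Q x) ∧ ∀ g x, J (ρ g x) = ρ g (J x) := by
  let J : E →ₗ⋆[ℂ] E :=
    { toFun x := Q (K.starProjection x)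
      map_add' x y := by
        rw [map_add, hQadd _ (K.starProjection_apply_mem x) _ (K.starProjection_apply_mem y)]
      map_smul' a x := by
        rw [map_smul, hQsmul _ _ (K.starProjection_apply_mem x)] }
  refine ⟨J, fun x hx => congrArg Q (K.starProjection_eq_self_iff.2 hx), fun g x => ?_⟩
  change Q _ = ρ g (Q _)
  rw [hρ.starProjection_apply hK, hQρ _ _ (K.starProjection_apply_mem x)]

theorem hasInvariantAltForm_of_hasQuaternionicSubrep [FiniteDimensional ℂ E]
    (hρ : ρ.IsUnitary) (h : ρ.HasQuaternionicSubrep) : ρ.HasInvariantAltForm := by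
  obtain ⟨K, hK0, hK, Q, hQK, hQadd, hQsmul, hQQ, hQρ⟩ := h
  obtain ⟨J, hJQ, hJρ⟩ := hρ.exists_conjLinear_extension hK hQadd hQsmul hQρ
  obtain ⟨x, hxK, hx0⟩ := (Submodule.ne_bot_iff K).1 hK0
  refine ⟨skewInnerForm J, fun hJ0 => hx0 ?_, skewInnerForm_isAlt J,
    hρ.skewInnerForm_apply_apply hJρ⟩
  have hval : skewInnerForm J x (Q x) = ⟪Q x, Q x⟫_ℂ + ⟪x, x⟫_ℂ := by
    rw [skewInnerForm_apply, hJQ x hxK, hJQ _ (hQK x hxK), hQQ x hxK, inner_neg_left,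
      sub_neg_eq_add]
  rw [hJ0, LinearMap.zero_apply, LinearMap.zero_apply] at hval
  have hre := congrArg (RCLike.re (K := ℂ)) hval
  rw [map_zero, map_add] at hre
  exact re_inner_self_nonpos.1 (by linarith [inner_self_nonneg (𝕜 := ℂ) (x := Q x)])

theorem hasQuaternionicSubrep_of_hasInvariantAltForm [FiniteDimensional ℂ E]
    (hρ : ρ.IsUnitary) (h : ρ.HasInvariantAltForm) : ρ.HasQuaternionicSubrep := by
  obtain ⟨B, hB0, hB, hBρ⟩ := h
  have hNpos := hB.inner_neg_rieszConj_comp_rieszConj_self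
  have hN0 : -(B.rieszConj ∘ₛₗ B.rieszConj) ≠ 0 := fun hN => hB0 <| LinearMap.ext₂ fun x y => by
    have hTx : B.rieszConj x = 0 := inner_self_eq_zero.1 <| by rw [← hNpos, hN]; simp
    rw [← LinearMap.BilinForm.inner_rieszConj_apply, hTx, inner_zero_left, LinearMap.zero_apply,
      LinearMap.zero_apply]
  obtain ⟨μ, hμ0, hμ⟩ :=
    hB.isSymmetric_neg_rieszConj_comp_rieszConj.exists_hasEigenvalue_ne_zero hN0
  have hμpos : 0 < μ := (eigenvalue_nonneg_of_nonneg hμ fun x => by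
    rw [hNpos]; exact inner_self_nonneg).lt_of_ne' hμ0
  exact hasQuaternionicSubrep_of_hasEigenvalue (hρ.rieszConj_apply_apply hBρ) hμpos hμ

theorem hasQuaternionicSubrep_iff_hasInvariantAltForm [FiniteDimensional ℂ E]
    (hρ : ρ.IsUnitary) : ρ.HasQuaternionicSubrep ↔ ρ.HasInvariantAltForm :=
  ⟨hρ.hasInvariantAltForm_of_hasQuaternionicSubrep, hρ.hasQuaternionicSubrep_of_hasInvariantAltForm⟩

end IsUnitary

end Representation

/-- For a finite-dimensional complex representation `W` of a finite group `G`,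
there is a nonzero `G`-invariant subspace `W' ⊆ W` carrying a `G`-invariant quaternionic structure
(a conjugate-linear map of `W'` squaring to `−id` and commuting with the `G`-action) iff there is
a nonzero (possibly degenerate) `G`-invariant alternating bilinear form on `W`. -/
theorem exists_quaternionic_type_subrep_iff_exists_invariant_alt_form
    {G : Type*} [Group G] [Finite G]
    {W : Type*} [AddCommGroup W] [Module ℂ W] [FiniteDimensional ℂ W]
    (ρ : Representation ℂ G W) :
    (∃ W' : Submodule ℂ W, W' ≠ ⊥ ∧ (∀ (s : G), ∀ x ∈ W', ρ s x ∈ W') ∧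
      ∃ Q : W → W,
        (∀ x ∈ W', Q x ∈ W') ∧
        (∀ x ∈ W', ∀ y ∈ W', Q (x + y) = Q x + Q y) ∧
        (∀ (a : ℂ), ∀ x ∈ W', Q (a • x) = (starRingEnd ℂ a) • Q x) ∧
        (∀ x ∈ W', Q (Q x) = -x) ∧
        (∀ (s : G), ∀ x ∈ W', Q (ρ s x) = ρ s (Q x))) ↔
      (∃ B : LinearMap.BilinForm ℂ W, B ≠ 0 ∧
        (∀ x : W, B x x = 0) ∧
        (∀ (s : G) (x y : W), B (ρ s x) (ρ s y) = B x y)) := by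
  have := Fintype.ofFinite G
  let e := LinearEquiv.ofFinrankEq W (EuclideanSpace ℂ (Fin (Module.finrank ℂ W)))
    finrank_euclideanSpace_fin.symm
  let := ρ.averagedInnerCore e.toLinearMap e.injective
  let : NormedAddCommGroup W := InnerProductSpace.Core.toNormedAddCommGroup (𝕜 := ℂ)
  let : InnerProductSpace ℂ W := InnerProductSpace.ofCore _
  have hρ : ρ.IsUnitary := ρ.averagedInnerCore_inner_apply_apply e.toLinearMap e.injective
  exact hρ.hasQuaternionicSubrep_iff_hasInvariantAltForm
end

section
/- Let G be a finite group, W a finite-dimensional complex vector space carrying a representation of G, and h a G-invariant Hermitian inner product on W (positive definite, ℂ-linear in the first variable and conjugate-linear in the second). If W admits a G-invariant quaternionic structure, then there exists a G-invariant quaternionic structure Q on W such that h(Qx, Qy) = h(y, x) for all x, y ∈ W. -/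
/-- A quaternionic structure on a complex vector space: a conjugate-linear map squaring to `−id`. -/
def IsQuaternionicStructure {W : Type*} [AddCommGroup W] [Module ℂ W] (Q : W → W) : Prop :=
  (∀ x y : W, Q (x + y) = Q x + Q y) ∧
  (∀ (a : ℂ) (x : W), Q (a • x) = (starRingEnd ℂ a) • Q x) ∧
  (∀ x : W, Q (Q x) = -x)

/-!
View `h` as an inner product and let `A = Q₀† Q₀ ≥ 0`. Because `Q₀² = -1`, the given structure
`Q₀` is compatible with the Hermitian product `⟪B x, y⟫`, where `B = 1 + A`:
`⟪B (Q₀ u), Q₀ v⟫ = ⟪B v, u⟫`. The operator `B` is strictly positive, and it commutes with every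
unitary commuting with `Q₀`; hence so does `T = √B`, which is invertible. Conjugating by `T`
carries `B` back to the original inner product: `Q = T Q₀ T⁻¹` satisfies
`⟪Q x, Q y⟫ = ⟪B Q₀ u, Q₀ v⟫ = ⟪B v, u⟫ = ⟪y, x⟫` for `x = T u`, `y = T v`.
-/

open scoped InnerProductSpace

namespace IsQuaternionicStructure

variable {V W : Type*} [AddCommGroup V] [Module ℂ V] [AddCommGroup W] [Module ℂ W]
  {Q : W → W}

def toSemilinearMap (hQ : IsQuaternionicStructure Q) : W →ₗ⋆[ℂ] W where
  toFun := Q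
  map_add' := hQ.1
  map_smul' := hQ.2.1

theorem conj (hQ : IsQuaternionicStructure Q) (e : W ≃ₗ[ℂ] V) :
    IsQuaternionicStructure fun x => e (Q (e.symm x)) :=
  ⟨fun x y => by simp [hQ.1], fun a x => by simp [hQ.2.1], fun x => by simp [hQ.2.2]⟩

end IsQuaternionicStructure

section InnerProductSpace

variable {E : Type*} [NormedAddCommGroup E] [InnerProductSpace ℂ E] [FiniteDimensional ℂ E]

open InnerProductSpace ContinuousLinearMap

/-- The operator `Q† Q` of a conjugate-linear map `Q`. -/
noncomputable def antilinearGram (Q : E →ₗ⋆[ℂ] E) : E →L[ℂ] E :=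
  LinearMap.toContinuousLinearMap
    { toFun := fun y => (toDual ℂ E).symm <| LinearMap.toContinuousLinearMap
        { toFun := fun x => ⟪Q x, Q y⟫_ℂ
          map_add' := fun x x' => by simp
          map_smul' := fun a x => by simp [mul_comm] }
      map_add' := fun y y' => ext_inner_right ℂ fun x => by
        simp [toDual_symm_apply, inner_add_left]
      map_smul' := fun a y => ext_inner_right ℂ fun x => by
        simp [toDual_symm_apply, inner_smul_left] }

theorem inner_antilinearGram_apply (Q : E →ₗ⋆[ℂ] E) (x y : E) :
    ⟪antilinearGram Q y, x⟫_ℂ = ⟪Q x, Q y⟫_ℂ :=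
  toDual_symm_apply

theorem isPositive_antilinearGram (Q : E →ₗ⋆[ℂ] E) : (antilinearGram Q).IsPositive := by
  refine ⟨fun x y => ?_, fun x => ?_⟩
  · rw [coe_coe, inner_antilinearGram_apply, ← inner_conj_symm x, inner_antilinearGram_apply,
      inner_conj_symm]
  · simpa [reApplyInnerSelf, inner_antilinearGram_apply] using inner_self_nonneg (𝕜 := ℂ)

theorem commute_antilinearGram (Q : E →ₗ⋆[ℂ] E) (U : E →ₗᵢ[ℂ] E)
    (hU : ∀ x, Q (U x) = U (Q x)) : Commute U.toContinuousLinearMap (antilinearGram Q) := by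
  ext x
  refine ext_inner_right ℂ fun y => ?_
  obtain ⟨y, rfl⟩ := LinearMap.injective_iff_surjective.mp U.injective y
  simp [inner_antilinearGram_apply, hU]

theorem inner_one_add_antilinearGram_map_map (Q : E →ₗ⋆[ℂ] E) (hQ : ∀ x, Q (Q x) = -x)
    (u v : E) : ⟪(1 + antilinearGram Q) (Q u), Q v⟫_ℂ = ⟪(1 + antilinearGram Q) v, u⟫_ℂ := by
  simp [inner_antilinearGram_apply, hQ, add_comm]

theorem IsQuaternionicStructure.exists_inner_compatible {Q₀ : E → E}
    (hQ₀ : IsQuaternionicStructure Q₀) :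
    ∃ Q : E → E, IsQuaternionicStructure Q ∧
      (∀ U : E →ₗᵢ[ℂ] E, (∀ x, Q₀ (U x) = U (Q₀ x)) → ∀ x, Q (U x) = U (Q x)) ∧
      ∀ x y, ⟪Q x, Q y⟫_ℂ = ⟪y, x⟫_ℂ := by
  set B := 1 + antilinearGram hQ₀.toSemilinearMap
  have hB : IsStrictlyPositive B := isStrictlyPositive_one.add_nonneg
    ((nonneg_iff_isPositive _).2 (isPositive_antilinearGram _))
  obtain ⟨T, hT⟩ := hB.isUnit_cfcSqrt
  have hTB : (T : E →L[ℂ] E) * T = B := hT ▸ CFC.sqrt_mul_sqrt_self B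
  have hTsa : IsSelfAdjoint (T : E →L[ℂ] E) := hT ▸ (CFC.sqrt_nonneg B).isSelfAdjoint
  let e := (ContinuousLinearEquiv.unitsEquiv ℂ E T).toLinearEquiv
  refine ⟨fun x => e (Q₀ (e.symm x)), hQ₀.conj e, fun U hU x => ?_, fun x y => ?_⟩
  · have hUB : Commute U.toContinuousLinearMap B :=
      (Commute.one_right _).add_right (commute_antilinearGram _ U hU)
    have hUT : Commute U.toContinuousLinearMap T := by
      rw [hT, CFC.sqrt_eq_cfc]
      exact (hUB.symm.cfc_nnreal _).symm
    have hUT' : ∀ x, e.symm (U x) = U (e.symm x) := fun x =>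
      congr($(hUT.units_inv_right) x).symm
    simp only [hUT', hU]
    exact congr($hUT _).symm
  · have hTT : ∀ a b, ⟪e a, e b⟫_ℂ = ⟪B a, b⟫_ℂ := fun a b => by
      rw [← hTB]
      exact (hTsa.isSymmetric _ _).symm
    obtain ⟨u, rfl⟩ := e.surjective x
    obtain ⟨v, rfl⟩ := e.surjective y
    simp only [LinearEquiv.symm_apply_apply]
    exact (hTT _ _).trans ((inner_one_add_antilinearGram_map_map _ hQ₀.2.2 u v).trans
      (hTT v u).symm)

end InnerProductSpace

/-- Mathlib's inner product is conjugate-linear in the first variable, hence `⟪x, y⟫ = h y x`. -/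
abbrev InnerProductSpace.Core.ofHermitian {W : Type*} [AddCommGroup W] [Module ℂ W]
    (h : W → W → ℂ)
    (hadd : ∀ x y z : W, h x (y + z) = h x y + h x z)
    (hsmul : ∀ (a : ℂ) (x y : W), h x (a • y) = (starRingEnd ℂ a) * h x y)
    (hherm : ∀ x y : W, h y x = starRingEnd ℂ (h x y))
    (hposdef : ∀ x : W, x ≠ 0 → 0 < (h x x).re) : InnerProductSpace.Core ℂ W where
  inner x y := h y x
  conj_inner_symm x y := (hherm x y).symm
  re_inner_nonneg x := by
    rcases eq_or_ne x 0 with rfl | hx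
    · have h00 : h 0 0 = 0 := by simpa using hadd 0 0 0
      show 0 ≤ (h 0 0).re
      simp [h00]
    · exact (hposdef x hx).le
  add_left x y z := hadd z x y
  smul_left x y a := hsmul a y x
  definite x hx := by
    by_contra hx0
    simpa [hx] using hposdef x hx0

theorem exists_invariant_quaternionic_structure_compatible_with_hermitian_general
    {G : Type*} [Group G]
    {W : Type*} [AddCommGroup W] [Module ℂ W] [FiniteDimensional ℂ W]
    (ρ : Representation ℂ G W)
    (h : W → W → ℂ)
    (hadd₂ : ∀ x y z : W, h x (y + z) = h x y + h x z)
    (hsmul₂ : ∀ (a : ℂ) (x y : W), h x (a • y) = (starRingEnd ℂ a) * h x y)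
    (hherm : ∀ x y : W, h y x = starRingEnd ℂ (h x y))
    (hposdef : ∀ x : W, x ≠ 0 → 0 < (h x x).re)
    (hinv : ∀ (s : G) (x y : W), h (ρ s x) (ρ s y) = h x y)
    (hquat : ∃ Q₀ : W → W, IsQuaternionicStructure Q₀ ∧
      ∀ (s : G) (x : W), Q₀ (ρ s x) = ρ s (Q₀ x)) :
    ∃ Q : W → W, IsQuaternionicStructure Q ∧ (∀ (s : G) (x : W), Q (ρ s x) = ρ s (Q x)) ∧
      ∀ x y : W, h (Q x) (Q y) = h y x := by
  obtain ⟨Q₀, hQ₀, hQ₀ρ⟩ := hquat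
  let core := InnerProductSpace.Core.ofHermitian h hadd₂ hsmul₂ hherm hposdef
  let _ : NormedAddCommGroup W := core.toNormedAddCommGroup
  let _ : InnerProductSpace ℂ W := InnerProductSpace.ofCore core.toCore
  obtain ⟨Q, hQ, hQU, hQh⟩ := hQ₀.exists_inner_compatible
  exact ⟨Q, hQ, fun s => hQU ((ρ s).isometryOfInner fun x y => hinv s y x) (hQ₀ρ s),
    fun x y => hQh y x⟩

/-- Let `W` be a finite-dimensional complex representation of a finite group
`G` and `h` a `G`-invariant Hermitian inner product on `W` (ℂ-linear in the first variable,
conjugate-linear in the second, positive definite).  If `W` admits a `G`-invariant quaternionic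
structure then it admits one, `Q`, satisfying moreover `h(Qx, Qy) = h(y, x)` for all `x, y`. -/
theorem exists_invariant_quaternionic_structure_compatible_with_hermitian
    {G : Type*} [Group G] [Finite G]
    {W : Type*} [AddCommGroup W] [Module ℂ W] [FiniteDimensional ℂ W]
    (ρ : Representation ℂ G W)
    (h : W → W → ℂ)
    (hadd₁ : ∀ x y z : W, h (x + y) z = h x z + h y z)
    (hsmul₁ : ∀ (a : ℂ) (x y : W), h (a • x) y = a * h x y)
    (hadd₂ : ∀ x y z : W, h x (y + z) = h x y + h x z)
    (hsmul₂ : ∀ (a : ℂ) (x y : W), h x (a • y) = (starRingEnd ℂ a) * h x y)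
    (hherm : ∀ x y : W, h y x = starRingEnd ℂ (h x y))
    (hposdef : ∀ x : W, x ≠ 0 → 0 < (h x x).re)
    (hinv : ∀ (s : G) (x y : W), h (ρ s x) (ρ s y) = h x y)
    (hquat : ∃ Q₀ : W → W, IsQuaternionicStructure Q₀ ∧
      ∀ (s : G) (x : W), Q₀ (ρ s x) = ρ s (Q₀ x)) :
    ∃ Q : W → W, IsQuaternionicStructure Q ∧ (∀ (s : G) (x : W), Q (ρ s x) = ρ s (Q x)) ∧
      ∀ x y : W, h (Q x) (Q y) = h y x :=
  exists_invariant_quaternionic_structure_compatible_with_hermitian_general ρ h hadd₂ hsmul₂ hherm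
    hposdef hinv hquat
end

section
/- Let (V, ω) be a finite-dimensional real symplectic vector space and J an ω-compatible complex structure on V. Let G be a finite group acting ℝ-linearly on V such that every group element preserves ω and commutes with J (so G acts ℂ-linearly on the complex vector space (V, J)). Suppose the representation of G on (V, J) is of real type, i.e. there exists a G-invariant real structure on (V, J) (an ℝ-linear map R₀ : V → V with R₀∘J = −J∘R₀, R₀∘R₀ = id, commuting with the G-action). Then there exists a G-invariant real structure R on (V, J) such that in addition ω(Rx, Ry) = −ω(x, y) for all x, y ∈ V. -/
/-!
The form `⟪x, y⟫ = ω x (J y)` is an inner product for which `J` and every `ρ s` are orthogonal.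
Let `S = R₀⋆R₀`. The unitary part `R = R₀ S^(-1/2)` of the polar decomposition of `R₀` is again
an involution, since `R₀ S R₀ = S⁻¹`. As `S^(-1/2)` is a polynomial in `S`, it commutes with `J`
and with `G`: conjugating `R₀` by a unitary into `±R₀` fixes `S`. Hence `R` is a `G`-invariant
real structure. Being orthogonal and anticommuting with `J`, `R` is antisymplectic:
`ω (R x) (R y) = ⟪J R x, R y⟫ = -⟪R J x, R y⟫ = -⟪J x, y⟫ = -ω x y`.
-/

open Polynomial
open scoped RealInnerProductSpace

lemma IsSelfAdjoint.aeval {R A : Type*} [CommSemiring R] [StarRing R] [TrivialStar R]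
    [Semiring A] [StarRing A] [Algebra R A] [StarModule R A] {a : A} (ha : IsSelfAdjoint a)
    (p : R[X]) : IsSelfAdjoint (aeval a p) := by
  induction p using Polynomial.induction_on' with
  | add p q hp hq => rw [map_add]; exact hp.add hq
  | monomial n r =>
    rw [aeval_monomial, Algebra.algebraMap_eq_smul_one, smul_one_mul]
    exact (IsSelfAdjoint.all r).smul (ha.pow n)

lemma SemiconjBy.star_mul_self_of_mem_unitary {M : Type*} [Monoid M] [StarMul M] {u x y : M}
    (hu : u ∈ unitary M) (h : SemiconjBy u x y) : SemiconjBy u (star x * x) (star y * y) := by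
  have hstar : SemiconjBy u (star x) (star y) := calc
    u * star x = u * star x * (star u * u) := by rw [Unitary.star_mul_self_of_mem hu, mul_one]
    _ = u * star (u * x) * u := by simp only [star_mul, mul_assoc]
    _ = u * star (y * u) * u := by rw [h.eq]
    _ = star y * u := by
      simp only [star_mul, ← mul_assoc, Unitary.mul_star_self_of_mem hu, one_mul]
  exact hstar.mul_right h

lemma Unitary.mem_iff_star_mul_self_of_isDedekindFinite {M : Type*} [Monoid M] [StarMul M]
    [IsDedekindFiniteMonoid M] {u : M} : u ∈ unitary M ↔ star u * u = 1 :=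
  ⟨And.left, fun h => ⟨h, mul_eq_one_comm.mp h⟩⟩

namespace LinearMap

open Module.End

lemma mem_unitary_iff_inner_map_map {𝕜 E : Type*} [RCLike 𝕜] [NormedAddCommGroup E]
    [InnerProductSpace 𝕜 E] [FiniteDimensional 𝕜 E] {T : E →ₗ[𝕜] E} :
    T ∈ unitary (E →ₗ[𝕜] E) ↔ ∀ x y, inner 𝕜 (T x) (T y) = inner 𝕜 x y := by
  rw [Unitary.mem_iff_star_mul_self_of_isDedekindFinite]
  constructor
  · intro h x y
    rw [← adjoint_inner_left, ← star_eq_adjoint, ← mul_apply, h, one_apply]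
  · intro h
    ext x
    refine ext_inner_right 𝕜 fun y => ?_
    rw [mul_apply, star_eq_adjoint, adjoint_inner_left, h, one_apply]

variable {E : Type*} [NormedAddCommGroup E] [InnerProductSpace ℝ E] [FiniteDimensional ℝ E]

lemma star_mul_self_apply_apply_of_mul_self_eq_one {R₀ : E →ₗ[ℝ] E} (hR₀ : R₀ * R₀ = 1)
    {μ : ℝ} (hμ : μ ≠ 0) {v : E} (hv : (star R₀ * R₀) v = μ • v) :
    (star R₀ * R₀) (R₀ v) = μ⁻¹ • R₀ v := by
  have hstar : star R₀ * star R₀ = 1 := by rw [← star_mul, hR₀, star_one]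
  have hR₀v : R₀ v = μ • star R₀ v := calc
    R₀ v = (star R₀ * star R₀) (R₀ v) := by rw [hstar, one_apply]
    _ = star R₀ ((star R₀ * R₀) v) := rfl
    _ = μ • star R₀ v := by rw [hv, map_smul]
  rw [mul_apply, ← mul_apply R₀, hR₀, one_apply, hR₀v, smul_smul, inv_mul_cancel₀ hμ, one_smul]

lemma pos_of_star_mul_self_apply_eq_smul {R₀ : E →ₗ[ℝ] E} (hR₀ : Function.Injective R₀)
    {μ : ℝ} {v : E} (hv₀ : v ≠ 0) (hv : (star R₀ * R₀) v = μ • v) : 0 < μ := by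
  have h : μ * ⟪v, v⟫ = ⟪R₀ v, R₀ v⟫ := by
    rw [← real_inner_smul_left, ← hv, mul_apply, star_eq_adjoint, adjoint_inner_left]
  have hR₀v : R₀ v ≠ 0 := (map_ne_zero_iff R₀ hR₀).mpr hv₀
  exact pos_of_mul_pos_left (h ▸ real_inner_self_pos.mpr hR₀v) real_inner_self_nonneg

theorem exists_mem_adjoin_mul_mul_self_eq_one_mem_unitary {R₀ : E →ₗ[ℝ] E}
    (hR₀ : R₀ * R₀ = 1) :
    ∃ P ∈ Algebra.adjoin ℝ {star R₀ * R₀},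
      R₀ * P * (R₀ * P) = 1 ∧ R₀ * P ∈ unitary (E →ₗ[ℝ] E) := by
  set S := star R₀ * R₀
  have hS : IsSelfAdjoint S := IsSelfAdjoint.star_mul_self R₀
  have hS' : S.IsSymmetric := (isSymmetric_iff_isSelfAdjoint S).mpr hS
  set b := hS'.eigenvectorBasis rfl
  set μ := hS'.eigenvalues rfl
  have hb i : S (b i) = μ i • b i := hS'.apply_eigenvectorBasis rfl i
  have hμ i : 0 < μ i := pos_of_star_mul_self_apply_eq_smul
    (Function.LeftInverse.injective (g := R₀) fun v => by rw [← mul_apply, hR₀, one_apply])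
    (b.orthonormal.ne_zero i) (hb i)
  -- `P = S^(-1/2)` as a polynomial in `S`; since `R₀` maps `μ`-eigenvectors of `S` to
  -- `μ⁻¹`-eigenvectors, the inverse eigenvalues are interpolation nodes too
  set t := Finset.univ.image μ ∪ Finset.univ.image fun i => (μ i)⁻¹
  set P := aeval S (Lagrange.interpolate t _root_.id fun x => (√x)⁻¹)
  have hP {v : E} {c : ℝ} (hc : c ∈ t) (hv : S v = c • v) : P v = (√c)⁻¹ • v := by
    rw [aeval_apply_of_mem_apply_eq_smul hv]
    exact congrArg (· • v) (Lagrange.eval_interpolate_at_node _ (Set.injOn_id _) hc)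
  have hPb i : P (b i) = (√(μ i))⁻¹ • b i := hP (by simp [t]) (hb i)
  have hPR₀b i : P (R₀ (b i)) = √(μ i) • R₀ (b i) := by
    rw [hP (by simp [t]) (star_mul_self_apply_apply_of_mul_self_eq_one hR₀ (hμ i).ne' (hb i)),
      Real.sqrt_inv, inv_inv]
  refine ⟨P, aeval_mem_adjoin_singleton _ _, b.toBasis.ext fun i => ?_, ?_⟩
  · simp [hPb, hPR₀b, smul_smul, inv_mul_cancel₀ (Real.sqrt_pos.2 (hμ i)).ne',
      ← mul_apply R₀ R₀, hR₀]
  · have hPSP : star (R₀ * P) * (R₀ * P) = P * (S * P) := by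
      rw [star_mul, (hS.aeval _).star_eq, mul_assoc, ← mul_assoc (star R₀)]
    rw [Unitary.mem_iff_star_mul_self_of_isDedekindFinite, hPSP]
    refine b.toBasis.ext fun i => ?_
    simp only [OrthonormalBasis.coe_toBasis, mul_apply, one_apply, hPb, hb, map_smul, smul_smul]
    convert one_smul ℝ (b i)
    rw [mul_comm, ← mul_assoc, ← mul_inv, Real.mul_self_sqrt (hμ i).le,
      inv_mul_cancel₀ (hμ i).ne']

end LinearMap

theorem exists_mem_unitary_invariant_real_structure
    {E : Type*} [NormedAddCommGroup E] [InnerProductSpace ℝ E] [FiniteDimensional ℝ E]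
    {ι : Type*} {J R₀ : E →ₗ[ℝ] E} {u : ι → E →ₗ[ℝ] E}
    (hJ : J ∈ unitary (E →ₗ[ℝ] E)) (hu : ∀ i, u i ∈ unitary (E →ₗ[ℝ] E))
    (hR₀J : R₀ * J = -(J * R₀)) (hR₀R₀ : R₀ * R₀ = 1) (hR₀u : ∀ i, Commute R₀ (u i)) :
    ∃ R ∈ unitary (E →ₗ[ℝ] E), R * J = -(J * R) ∧ R * R = 1 ∧ ∀ i, Commute R (u i) := by
  obtain ⟨P, hP, hRR, hRu⟩ := LinearMap.exists_mem_adjoin_mul_mul_self_eq_one_mem_unitary hR₀R₀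
  have hP_comm {v y} (hv : v ∈ unitary (E →ₗ[ℝ] E)) (h : SemiconjBy v R₀ y)
      (hy : star y * y = star R₀ * R₀) : Commute v P :=
    Algebra.commute_of_mem_adjoin_singleton_of_commute hP <| by
      have h' := h.star_mul_self_of_mem_unitary hv
      rwa [hy] at h'
  have hJP : Commute J P := hP_comm hJ (y := -R₀)
    (by rw [SemiconjBy, neg_mul, hR₀J, neg_neg]) (by rw [star_neg, neg_mul_neg])
  refine ⟨R₀ * P, hRu, ?_, hRR,
    fun i => (hR₀u i).mul_left (hP_comm (hu i) (hR₀u i).symm rfl).symm⟩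
  rw [mul_assoc, ← hJP.eq, ← mul_assoc, hR₀J, neg_mul, mul_assoc]

namespace LinearMap.BilinForm

variable {V : Type*} [AddCommGroup V] [Module ℝ V] {ω : LinearMap.BilinForm ℝ V}
  {J : V →ₗ[ℝ] V}

lemma apply_map_comm_of_compatible (halt : ∀ x, ω x x = 0) (hJ : J ∘ₗ J = -LinearMap.id)
    (hcompat : ∀ x y, ω (J x) (J y) = ω x y) (x y : V) : ω x (J y) = ω y (J x) := calc
  ω x (J y) = ω (J x) (J (J y)) := (hcompat x (J y)).symm
  _ = -ω (J x) y := by rw [← LinearMap.comp_apply J J, hJ]; simp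
  _ = ω y (J x) := IsAlt.neg_eq halt (J x) y

abbrev compatibleInnerProductCore (hsymm : ∀ x y, ω x (J y) = ω y (J x))
    (hpos : ∀ x, x ≠ 0 → 0 < ω x (J x)) : InnerProductSpace.Core ℝ V where
  inner x y := ω x (J y)
  conj_inner_symm x y := hsymm y x
  re_inner_nonneg x := by
    rcases eq_or_ne x 0 with rfl | hx
    · simp
    · exact (hpos x hx).le
  add_left x y z := by simp
  smul_left x y r := by simp
  definite x hx := by
    by_contra h
    exact (hpos x h).ne' hx

end LinearMap.BilinForm

theorem exists_invariant_real_structure_antisymplectic_general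
    {V : Type*} [AddCommGroup V] [Module ℝ V] [FiniteDimensional ℝ V]
    {G : Type*} [Group G]
    (ω : LinearMap.BilinForm ℝ V)
    (halt : ∀ x : V, ω x x = 0)
    (J : V →ₗ[ℝ] V)
    (hJ : J ∘ₗ J = -LinearMap.id)
    (hcompat : ∀ x y : V, ω (J x) (J y) = ω x y)
    (hpos : ∀ x : V, x ≠ 0 → 0 < ω x (J x))
    (ρ : Representation ℝ G V)
    (hρω : ∀ (s : G) (x y : V), ω (ρ s x) (ρ s y) = ω x y)
    (hρJ : ∀ (s : G) (x : V), ρ s (J x) = J (ρ s x))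
    (hreal : ∃ R₀ : V →ₗ[ℝ] V,
      R₀ ∘ₗ J = -(J ∘ₗ R₀) ∧ R₀ ∘ₗ R₀ = LinearMap.id ∧
      ∀ s : G, R₀ ∘ₗ ρ s = ρ s ∘ₗ R₀) :
    ∃ R : V →ₗ[ℝ] V,
      R ∘ₗ J = -(J ∘ₗ R) ∧ R ∘ₗ R = LinearMap.id ∧
      (∀ s : G, R ∘ₗ ρ s = ρ s ∘ₗ R) ∧
      ∀ x y : V, ω (R x) (R y) = -ω x y := by
  obtain ⟨R₀, hR₀J, hR₀R₀, hR₀ρ⟩ := hreal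
  let core := LinearMap.BilinForm.compatibleInnerProductCore
    (LinearMap.BilinForm.apply_map_comm_of_compatible halt hJ hcompat) hpos
  let _ : NormedAddCommGroup V := core.toNormedAddCommGroup
  let _ : InnerProductSpace ℝ V := .ofCore core.toCore
  have hJu : J ∈ unitary (V →ₗ[ℝ] V) :=
    LinearMap.mem_unitary_iff_inner_map_map.2 fun x y => hcompat x (J y)
  have hρu s : ρ s ∈ unitary (V →ₗ[ℝ] V) :=
    LinearMap.mem_unitary_iff_inner_map_map.2 fun x y => by
      change ω (ρ s x) (J (ρ s y)) = ω x (J y)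
      rw [← hρJ, hρω]
  obtain ⟨R, hRu, hRJ, hRR, hRρ⟩ :=
    exists_mem_unitary_invariant_real_structure hJu hρu hR₀J hR₀R₀ hR₀ρ
  refine ⟨R, hRJ, hRR, hRρ, fun x y => ?_⟩
  calc ω (R x) (R y) = ⟪J (R x), R y⟫ := (hcompat _ _).symm
    _ = -⟪R (J x), R y⟫ := by
      rw [← Module.End.mul_apply, neg_eq_iff_eq_neg.mp hRJ.symm, LinearMap.neg_apply,
        inner_neg_left, Module.End.mul_apply]
    _ = -⟪J x, y⟫ := by rw [LinearMap.mem_unitary_iff_inner_map_map.1 hRu]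
    _ = -ω x y := congrArg Neg.neg (hcompat x y)

/-- Let `(V, ω)` be a finite-dimensional real symplectic vector space, `J` an
`ω`-compatible complex structure, and `G` a finite group acting on `V` preserving `ω` and
commuting with `J`.  If the complex representation of `G` on `(V, J)` admits a `G`-invariant real
structure (an ℝ-linear `R₀` with `R₀J = −JR₀`, `R₀² = id`, commuting with `G`), then it admits a
`G`-invariant real structure `R` with moreover `ω(Rx, Ry) = −ω(x, y)` for all `x, y ∈ V`. -/
theorem exists_invariant_real_structure_antisymplectic
    {V : Type*} [AddCommGroup V] [Module ℝ V] [FiniteDimensional ℝ V]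
    {G : Type*} [Group G] [Finite G]
    (ω : LinearMap.BilinForm ℝ V)
    (halt : ∀ x : V, ω x x = 0)
    (hnondeg : ∀ x : V, (∀ y : V, ω x y = 0) → x = 0)
    (J : V →ₗ[ℝ] V)
    (hJ : J ∘ₗ J = -LinearMap.id)
    (hcompat : ∀ x y : V, ω (J x) (J y) = ω x y)
    (hpos : ∀ x : V, x ≠ 0 → 0 < ω x (J x))
    (ρ : Representation ℝ G V)
    (hρω : ∀ (s : G) (x y : V), ω (ρ s x) (ρ s y) = ω x y)
    (hρJ : ∀ (s : G) (x : V), ρ s (J x) = J (ρ s x))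
    (hreal : ∃ R₀ : V →ₗ[ℝ] V,
      R₀ ∘ₗ J = -(J ∘ₗ R₀) ∧ R₀ ∘ₗ R₀ = LinearMap.id ∧
      ∀ s : G, R₀ ∘ₗ ρ s = ρ s ∘ₗ R₀) :
    ∃ R : V →ₗ[ℝ] V,
      R ∘ₗ J = -(J ∘ₗ R) ∧ R ∘ₗ R = LinearMap.id ∧
      (∀ s : G, R ∘ₗ ρ s = ρ s ∘ₗ R) ∧
      ∀ x y : V, ω (R x) (R y) = -ω x y :=
  exists_invariant_real_structure_antisymplectic_general ω halt J hJ hcompat hpos ρ hρω hρJ hreal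
end
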